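/- arXiv:2308.03811 — 12 statements merged into one kernel-verified Lean document; each statement's English description precedes it below -/
import Mathlib

section
/- For every t, ‖v_t^Q − v_t*‖² ≤ c₂ ‖y_{t+1} − y_t*‖² + ε_t², where c₂ := (1 + 1/(λμ_g)) C_Q² and ε_t² := (1 + λμ_g)(1 − λμ_g)^{2Q_t}(2‖v⁰‖² + 2M_v²); moreover the error sequence decays: ε_{t+1}² ≤ (1 − αμ_g/2) ε_t² for every t. -/
/-!
Square the conjugate-gradient bound `‖v_t^Q - v_t*‖ ≤ a + c` with Young's inequality
`(a + c)² ≤ (1 + 1/ρ) a² + (1 + ρ) c²` at `ρ = λμ_g`, and bound `‖v⁰ - v_t*‖² ≤ 2‖v⁰‖² + 2M_v²`.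
For the decay, `ε_{t+1}² / ε_t² = (1 - λμ_g)^{2(Q_{t+1} - Q_t)}`, and the lower bound on the gap
`Q_{t+1} - Q_t` is exactly what makes this power at most `1 - αμ_g/2`, the logarithm of the base
being negative.
-/

open Real

theorem add_sq_le_one_add_inv_mul_sq_add_one_add_mul_sq (a c : ℝ) {ρ : ℝ} (hρ : 0 < ρ) :
    (a + c) ^ 2 ≤ (1 + 1 / ρ) * a ^ 2 + (1 + ρ) * c ^ 2 := by
  have slack : (1 + 1 / ρ) * a ^ 2 + (1 + ρ) * c ^ 2 - (a + c) ^ 2 = (a - ρ * c) ^ 2 / ρ := by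
    field_simp
    ring
  linarith [div_nonneg (sq_nonneg (a - ρ * c)) hρ.le]

theorem norm_sub_sq_le_of_norm_le {E : Type*} [SeminormedAddCommGroup E] (x : E) {y : E}
    {M : ℝ} (hy : ‖y‖ ≤ M) : ‖x - y‖ ^ 2 ≤ 2 * ‖x‖ ^ 2 + 2 * M ^ 2 := by
  have hyM : ‖y‖ ^ 2 ≤ M ^ 2 := pow_le_pow_left₀ (norm_nonneg y) hy 2
  have htri : ‖x - y‖ ^ 2 ≤ (‖x‖ + ‖y‖) ^ 2 :=
    pow_le_pow_left₀ (norm_nonneg _) (norm_sub_le x y) 2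
  nlinarith [sq_nonneg (‖x‖ - ‖y‖)]

theorem Real.rpow_le_mul_rpow_of_log_div_log_le {b s x x' : ℝ} (hb0 : 0 < b) (hb1 : b < 1)
    (hs : 0 < s) (hgap : log s / log b ≤ x' - x) : b ^ x' ≤ s * b ^ x := by
  have hstep : b ^ (x' - x) ≤ s := by
    rw [rpow_le_iff_le_log hb0 hs, ← div_le_iff_of_neg (log_neg hb0 hb1)]
    exact hgap
  calc b ^ x' = b ^ (x' - x) * b ^ x := by rw [← rpow_add hb0, sub_add_cancel]
    _ ≤ s * b ^ x := by gcongr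

theorem cg_error_bound_and_decay_general
    {F : Type*} [NormedAddCommGroup F]
    (μg lam α CQ Mv : ℝ)
    (hμg : 0 < μg) (hlam : 0 < lam) (hlamμ : lam * μg < 1)
    (hαμ : α * μg < 2)
    (v0 : F) (Q : ℕ → ℝ)
    (hQgap : ∀ t, Real.log (1 - α * μg / 2) / (2 * Real.log (1 - lam * μg)) ≤ Q (t + 1) - Q t)
    (vstar vQ ystar ynext : ℕ → F)
    (hvstar : ∀ t, ‖vstar t‖ ≤ Mv)
    (hcg : ∀ t, ‖vQ t - vstar t‖ ≤
      CQ * ‖ystar t - ynext t‖ + (1 - lam * μg) ^ (Q t) * ‖v0 - vstar t‖) :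
    (∀ t, ‖vQ t - vstar t‖ ^ 2 ≤
        (1 + 1 / (lam * μg)) * CQ ^ 2 * ‖ynext t - ystar t‖ ^ 2
          + (1 + lam * μg) * (1 - lam * μg) ^ (2 * Q t) * (2 * ‖v0‖ ^ 2 + 2 * Mv ^ 2)) ∧
      (∀ t, (1 + lam * μg) * (1 - lam * μg) ^ (2 * Q (t + 1)) * (2 * ‖v0‖ ^ 2 + 2 * Mv ^ 2)
          ≤ (1 - α * μg / 2) *
            ((1 + lam * μg) * (1 - lam * μg) ^ (2 * Q t) * (2 * ‖v0‖ ^ 2 + 2 * Mv ^ 2))) := by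
  have hρ : 0 < lam * μg := mul_pos hlam hμg
  have hb0 : 0 < 1 - lam * μg := by linarith
  have hsq (q : ℝ) : (1 - lam * μg) ^ (2 * q) = ((1 - lam * μg) ^ q) ^ 2 := by
    rw [← rpow_mul_natCast hb0.le, Nat.cast_ofNat, mul_comm q]
  constructor
  · intro t
    calc ‖vQ t - vstar t‖ ^ 2
        ≤ (CQ * ‖ystar t - ynext t‖ + (1 - lam * μg) ^ (Q t) * ‖v0 - vstar t‖) ^ 2 :=
          pow_le_pow_left₀ (norm_nonneg _) (hcg t) 2
      _ ≤ (1 + 1 / (lam * μg)) * (CQ * ‖ystar t - ynext t‖) ^ 2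
            + (1 + lam * μg) * ((1 - lam * μg) ^ (Q t) * ‖v0 - vstar t‖) ^ 2 :=
          add_sq_le_one_add_inv_mul_sq_add_one_add_mul_sq _ _ hρ
      _ = (1 + 1 / (lam * μg)) * CQ ^ 2 * ‖ynext t - ystar t‖ ^ 2
            + (1 + lam * μg) * (1 - lam * μg) ^ (2 * Q t) * ‖v0 - vstar t‖ ^ 2 := by
          rw [mul_pow, mul_pow, hsq, norm_sub_rev (ystar t)]
          ring
      _ ≤ _ := by gcongr; exact norm_sub_sq_le_of_norm_le v0 (hvstar t)
  · intro t
    have hgap : log (1 - α * μg / 2) / log (1 - lam * μg) ≤ 2 * Q (t + 1) - 2 * Q t := by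
      have := hQgap t
      rw [mul_comm 2 (log _), ← div_div, div_le_iff₀ two_pos] at this
      linarith
    calc (1 + lam * μg) * (1 - lam * μg) ^ (2 * Q (t + 1)) * (2 * ‖v0‖ ^ 2 + 2 * Mv ^ 2)
        ≤ (1 + lam * μg) * ((1 - α * μg / 2) * (1 - lam * μg) ^ (2 * Q t))
            * (2 * ‖v0‖ ^ 2 + 2 * Mv ^ 2) := by
          gcongr
          exact rpow_le_mul_rpow_of_log_div_log_le hb0 (by linarith) (by linarith) hgap
      _ = _ := by ring

/-- the conjugate-gradient error bound squared, and decay of the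
error sequence `ε_t² := (1+λμ_g)(1-λμ_g)^{2Q_t}(2‖v⁰‖² + 2M_v²)`, with
`c₂ := (1 + 1/(λμ_g)) C_Q²`.  Real exponents are interpreted as `rpow`. -/
theorem cg_error_bound_and_decay
    {F : Type*} [NormedAddCommGroup F] [InnerProductSpace ℝ F] [FiniteDimensional ℝ F]
    (μg lam α CQ Mv : ℝ)
    (hμg : 0 < μg) (hlam : 0 < lam) (hlamμ : lam * μg < 1)
    (hα : 0 < α) (hαμ : α * μg < 2) (hCQ : 0 < CQ) (hMv : 0 < Mv)
    (v0 : F) (Q : ℕ → ℝ) (hQ0 : ∀ t, 0 ≤ Q t)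
    (hQgap : ∀ t, Real.log (1 - α * μg / 2) / (2 * Real.log (1 - lam * μg)) ≤ Q (t + 1) - Q t)
    (vstar vQ ystar ynext : ℕ → F)
    (hvstar : ∀ t, ‖vstar t‖ ≤ Mv)
    (hcg : ∀ t, ‖vQ t - vstar t‖ ≤
      CQ * ‖ystar t - ynext t‖ + (1 - lam * μg) ^ (Q t) * ‖v0 - vstar t‖) :
    (∀ t, ‖vQ t - vstar t‖ ^ 2 ≤
        (1 + 1 / (lam * μg)) * CQ ^ 2 * ‖ynext t - ystar t‖ ^ 2
          + (1 + lam * μg) * (1 - lam * μg) ^ (2 * Q t) * (2 * ‖v0‖ ^ 2 + 2 * Mv ^ 2)) ∧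
      (∀ t, (1 + lam * μg) * (1 - lam * μg) ^ (2 * Q (t + 1)) * (2 * ‖v0‖ ^ 2 + 2 * Mv ^ 2)
          ≤ (1 - α * μg / 2) *
            ((1 + lam * μg) * (1 - lam * μg) ^ (2 * Q t) * (2 * ‖v0‖ ^ 2 + 2 * Mv ^ 2))) :=
  cg_error_bound_and_decay_general μg lam α CQ Mv hμg hlam hlamμ hαμ v0 Q hQgap vstar vQ ystar ynext
    hvstar hcg
end

section
/- If v* ∈ F satisfies H v* = ∇_y f(x, y*(x)), where H : F → F is a linear map with ⟨H v, v⟩ ≥ μ_g‖v‖² for all v ∈ F, then ‖v*‖ ≤ (ρμ_g + DL₁² + DL₁μ_g)/μ_g². -/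
open RealInnerProductSpace

/-- Partial gradient in the first variable of a real-valued function on `E × F`. -/
noncomputable def gradX {E F : Type*}
    [NormedAddCommGroup E] [InnerProductSpace ℝ E] [CompleteSpace E]
    [NormedAddCommGroup F] [InnerProductSpace ℝ F] [CompleteSpace F]
    (f : E → F → ℝ) (x : E) (y : F) : E :=
  gradient (fun u => f u y) x

/-- Partial gradient in the second variable of a real-valued function on `E × F`. -/
noncomputable def gradY {E F : Type*}
    [NormedAddCommGroup E] [InnerProductSpace ℝ E] [CompleteSpace E]
    [NormedAddCommGroup F] [InnerProductSpace ℝ F] [CompleteSpace F]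
    (f : E → F → ℝ) (x : E) (y : F) : F :=
  gradient (fun v => f x v) y

/-- if `H v* = ∇_y f(x, y*(x))` for a `μ_g`-coercive linear map `H`,
then `‖v*‖ ≤ (ρ μ_g + D L₁² + D L₁ μ_g)/μ_g²`. -/
theorem linear_system_solution_bound
    {E : Type*} [NormedAddCommGroup E] [InnerProductSpace ℝ E] [FiniteDimensional ℝ E]
    {F : Type*} [NormedAddCommGroup F] [InnerProductSpace ℝ F] [FiniteDimensional ℝ F]
    (L₁ μg D ρ : ℝ) (hL₁ : 0 < L₁) (hμg : 0 < μg) (hD : 0 < D) (hρ : 0 < ρ)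
    (f : E → F → ℝ)
    (hdiff : Differentiable ℝ (fun p : E × F => f p.1 p.2))
    (hLip : ∀ x x' : E, ∀ y y' : F,
      ‖gradX f x y - gradX f x' y'‖ ^ 2 + ‖gradY f x y - gradY f x' y'‖ ^ 2
        ≤ L₁ ^ 2 * (‖x - x'‖ ^ 2 + ‖y - y'‖ ^ 2))
    (ystar : E → F)
    (hyLip : ∀ x x' : E, ‖ystar x - ystar x'‖ ≤ L₁ / μg * ‖x - x'‖)
    (𝒳 : Set E) (hbdd : ∀ x ∈ 𝒳, ∀ x' ∈ 𝒳, ‖x - x'‖ ≤ D)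
    (xhat : E) (hxhat : xhat ∈ 𝒳)
    (hfeas : ‖gradY f xhat (ystar xhat)‖ ≤ ρ)
    (x : E) (hx : x ∈ 𝒳)
    (H : F →L[ℝ] F) (hH : ∀ v : F, μg * ‖v‖ ^ 2 ≤ ⟪H v, v⟫)
    (vstar : F) (hv : H vstar = gradY f x (ystar x)) :
    ‖vstar‖ ≤ (ρ * μg + D * L₁ ^ 2 + D * L₁ * μg) / μg ^ 2 := by
  set g := gradY f x (ystar x) - gradY f xhat (ystar xhat) with hg
  set R := L₁ * D + L₁ ^ 2 * D / μg with hR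
  have hRpos : 0 < R := by positivity
  have ha : ‖x - xhat‖ ≤ D := hbdd x hx xhat hxhat
  have hb : ‖ystar x - ystar xhat‖ ≤ L₁ / μg * D := by
    calc ‖ystar x - ystar xhat‖ ≤ L₁ / μg * ‖x - xhat‖ := hyLip x xhat
    _ ≤ L₁ / μg * D := by
        apply mul_le_mul_of_nonneg_left ha (by positivity)
  have ha2 : ‖x - xhat‖ ^ 2 ≤ D ^ 2 := by nlinarith [norm_nonneg (x - xhat)]
  have hb2 : ‖ystar x - ystar xhat‖ ^ 2 ≤ (L₁ / μg * D) ^ 2 := by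
    nlinarith [norm_nonneg (ystar x - ystar xhat)]
  have hgsq : ‖g‖ ^ 2 ≤ L₁ ^ 2 * (‖x - xhat‖ ^ 2 + ‖ystar x - ystar xhat‖ ^ 2) := by
    have := hLip x xhat (ystar x) (ystar xhat)
    nlinarith [sq_nonneg ‖gradX f x (ystar x) - gradX f xhat (ystar xhat)‖]
  have hgR2 : ‖g‖ ^ 2 ≤ R ^ 2 := by
    have hmid : L₁ ^ 2 * (‖x - xhat‖ ^ 2 + ‖ystar x - ystar xhat‖ ^ 2)
        ≤ L₁ ^ 2 * (D ^ 2 + (L₁ / μg * D) ^ 2) :=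
      mul_le_mul_of_nonneg_left (add_le_add ha2 hb2) (sq_nonneg L₁)
    have hlast : L₁ ^ 2 * (D ^ 2 + (L₁ / μg * D) ^ 2) ≤ R ^ 2 := by
      have hdiff : R ^ 2 - L₁ ^ 2 * (D ^ 2 + (L₁ / μg * D) ^ 2)
          = 2 * L₁ ^ 3 * D ^ 2 / μg := by
        rw [hR]; field_simp; ring
      have hpos : 0 ≤ 2 * L₁ ^ 3 * D ^ 2 / μg := by positivity
      linarith
    exact le_trans (le_trans hgsq hmid) hlast
  have hgle : ‖g‖ ≤ R := by
    nlinarith [norm_nonneg g, hRpos]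
  have hHv : ‖H vstar‖ ≤ ρ + R := by
    rw [hv]
    calc ‖gradY f x (ystar x)‖ = ‖g + gradY f xhat (ystar xhat)‖ := by
          rw [hg, sub_add_cancel]
    _ ≤ ‖g‖ + ‖gradY f xhat (ystar xhat)‖ := norm_add_le _ _
    _ ≤ R + ρ := add_le_add hgle hfeas
    _ = ρ + R := by ring
  have hkey : μg * ‖vstar‖ ≤ ‖H vstar‖ := by
    rcases eq_or_ne vstar 0 with h0 | h0
    · simp [h0]
    · have h1 : μg * ‖vstar‖ ^ 2 ≤ ‖H vstar‖ * ‖vstar‖ :=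
        (hH vstar).trans (real_inner_le_norm _ _)
      have hvn : 0 < ‖vstar‖ := norm_pos_iff.mpr h0
      nlinarith
  have hμg2 : (0:ℝ) < μg ^ 2 := by positivity
  rw [le_div_iff₀ hμg2]
  have hfin : μg * ‖vstar‖ ≤ ρ + R := hkey.trans hHv
  have hmul : μg * (μg * ‖vstar‖) ≤ μg * (ρ + R) :=
    mul_le_mul_of_nonneg_left hfin hμg.le
  have hrhs : μg * (ρ + R) = ρ * μg + D * L₁ ^ 2 + D * L₁ * μg := by
    rw [hR]; field_simp; ring
  have hlhs : μg * (μg * ‖vstar‖) = ‖vstar‖ * μg ^ 2 := by ring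
  linarith [hmul, hrhs ▸ hmul]
end

section
/- For all x₁, x₂ ∈ E, the minimizer map satisfies ‖y*(x₁) − y*(x₂)‖ ≤ (L₁/μ_g) ‖x₁ − x₂‖. -/
open RealInnerProductSpace

/-- the minimizer map of a jointly smooth, inner strongly convex
function is `(L₁/μ_g)`-Lipschitz.  The Lipschitz property of the full gradient
`∇g` on `E × F` (with the ℓ²-product norm) is expressed through the partial
gradients. -/
theorem minimizer_map_lipschitz
    {E : Type*} [NormedAddCommGroup E] [InnerProductSpace ℝ E] [FiniteDimensional ℝ E]
    {F : Type*} [NormedAddCommGroup F] [InnerProductSpace ℝ F] [FiniteDimensional ℝ F]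
    (L₁ μg : ℝ) (hL₁ : 0 < L₁) (hμg : 0 < μg)
    (g : E → F → ℝ)
    (hdiff : Differentiable ℝ (fun p : E × F => g p.1 p.2))
    (hLip : ∀ x x' : E, ∀ y y' : F,
      ‖gradX g x y - gradX g x' y'‖ ^ 2 + ‖gradY g x y - gradY g x' y'‖ ^ 2
        ≤ L₁ ^ 2 * (‖x - x'‖ ^ 2 + ‖y - y'‖ ^ 2))
    (ystar : E → F)
    (hsc : ∀ x : E, ∀ y y' : F,
      g x y + ⟪gradY g x y, y' - y⟫ + μg / 2 * ‖y' - y‖ ^ 2 ≤ g x y')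
    (hmin : ∀ x : E, ∀ y : F, g x (ystar x) ≤ g x y)
    (hopt : ∀ x : E, gradY g x (ystar x) = 0) :
    ∀ x₁ x₂ : E, ‖ystar x₁ - ystar x₂‖ ≤ L₁ / μg * ‖x₁ - x₂‖ := by
  intro x₁ x₂
  set y₁ := ystar x₁
  set y₂ := ystar x₂
  rcases eq_or_ne y₁ y₂ with h | h
  · rw [h, sub_self, norm_zero]
    positivity
  -- strong convexity inequalities
  have h1 := hsc x₁ y₁ y₂
  have h2 := hsc x₁ y₂ y₁
  rw [hopt x₁] at h1
  simp only [inner_zero_left] at h1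
  have hnn : (0:ℝ) < ‖y₁ - y₂‖ := by
    rw [norm_pos_iff, sub_ne_zero]; exact h
  have hnorm : ‖y₂ - y₁‖ = ‖y₁ - y₂‖ := norm_sub_rev _ _
  rw [hnorm] at h1
  have key : μg * ‖y₁ - y₂‖ ^ 2 ≤ -⟪gradY g x₁ y₂, y₁ - y₂⟫ := by
    linarith
  have cs : -⟪gradY g x₁ y₂, y₁ - y₂⟫ ≤ ‖gradY g x₁ y₂‖ * ‖y₁ - y₂‖ := by
    have := abs_real_inner_le_norm (gradY g x₁ y₂) (y₁ - y₂)
    have := neg_abs_le (⟪gradY g x₁ y₂, y₁ - y₂⟫ : ℝ)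
    linarith
  -- gradient bound from Lipschitzness
  have hg : ‖gradY g x₁ y₂‖ ≤ L₁ * ‖x₁ - x₂‖ := by
    have hl := hLip x₁ x₂ y₂ y₂
    rw [hopt x₂, sub_zero, sub_self, norm_zero] at hl
    have h0 : ‖gradY g x₁ y₂‖ ^ 2 ≤ (L₁ * ‖x₁ - x₂‖) ^ 2 := by
      nlinarith [sq_nonneg ‖gradX g x₁ y₂ - gradX g x₂ y₂‖]
    nlinarith [norm_nonneg (gradY g x₁ y₂), mul_nonneg hL₁.le (norm_nonneg (x₁ - x₂))]
  have : μg * ‖y₁ - y₂‖ ^ 2 ≤ L₁ * ‖x₁ - x₂‖ * ‖y₁ - y₂‖ := by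
    calc μg * ‖y₁ - y₂‖ ^ 2 ≤ -⟪gradY g x₁ y₂, y₁ - y₂⟫ := key
    _ ≤ ‖gradY g x₁ y₂‖ * ‖y₁ - y₂‖ := cs
    _ ≤ L₁ * ‖x₁ - x₂‖ * ‖y₁ - y₂‖ := by
        exact mul_le_mul_of_nonneg_right hg (norm_nonneg _)
  rw [div_mul_eq_mul_div, le_div_iff₀ hμg]
  nlinarith
end

section
/- For any x ∈ E, y, y* ∈ F and v*, v^Q ∈ F with ‖v*‖ ≤ M_v, the one-step hypergradient estimation error satisfies ‖[∇_x f(x, y*) − J(x, y*) v*] − [∇_x f(x, y) − J(x, y) v^Q]‖² ≤ (3L₁² + 3L₂² M_v²)‖y − y*‖² + 3L₁²‖v* − v^Q‖². -/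
open RealInnerProductSpace

/-- The mixed second derivative `∇ₓ∇_y g (x,y) : F →L[ℝ] E`, i.e. the adjoint of the
derivative in `x` of the map `x ↦ ∇_y g(x,y)`. -/
noncomputable def mixedD {E F : Type*}
    [NormedAddCommGroup E] [InnerProductSpace ℝ E] [CompleteSpace E]
    [NormedAddCommGroup F] [InnerProductSpace ℝ F] [CompleteSpace F]
    (g : E → F → ℝ) (x : E) (y : F) : F →L[ℝ] E :=
  ContinuousLinearMap.adjoint (fderiv ℝ (fun u => gradY g u y) x)

/-- the one-step hypergradient estimation error bound
`‖[∇ₓf(x,y*) - J(x,y*)v*] - [∇ₓf(x,y) - J(x,y)v^Q]‖²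
   ≤ (3L₁² + 3L₂²M_v²)‖y - y*‖² + 3L₁²‖v* - v^Q‖²`. -/
theorem one_step_hypergradient_error
    {E : Type*} [NormedAddCommGroup E] [InnerProductSpace ℝ E] [FiniteDimensional ℝ E]
    {F : Type*} [NormedAddCommGroup F] [InnerProductSpace ℝ F] [FiniteDimensional ℝ F]
    (L₁ L₂ Mv : ℝ) (hL₁ : 0 < L₁) (hL₂ : 0 < L₂) (hMv : 0 < Mv)
    (f g : E → F → ℝ)
    (hfdiff : Differentiable ℝ (fun p : E × F => f p.1 p.2))
    (hfLip : ∀ x x' : E, ∀ y y' : F,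
      ‖gradX f x y - gradX f x' y'‖ ^ 2 + ‖gradY f x y - gradY f x' y'‖ ^ 2
        ≤ L₁ ^ 2 * (‖x - x'‖ ^ 2 + ‖y - y'‖ ^ 2))
    (hg2x : ∀ y : F, Differentiable ℝ (fun u : E => gradY g u y))
    (hg2y : ∀ x : E, Differentiable ℝ (fun v : F => gradY g x v))
    (hJb : ∀ (x : E) (y : F), ‖mixedD g x y‖ ≤ L₁)
    (hJl : ∀ (x : E) (y y' : F), ‖mixedD g x y - mixedD g x y'‖ ≤ L₂ * ‖y - y'‖)
    (x : E) (y yst : F) (vst vQ : F) (hvst : ‖vst‖ ≤ Mv) :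
    ‖(gradX f x yst - mixedD g x yst vst) - (gradX f x y - mixedD g x y vQ)‖ ^ 2
      ≤ (3 * L₁ ^ 2 + 3 * L₂ ^ 2 * Mv ^ 2) * ‖y - yst‖ ^ 2
        + 3 * L₁ ^ 2 * ‖vst - vQ‖ ^ 2 := by
  have ha : ‖gradX f x yst - gradX f x y‖ ^ 2 ≤ L₁ ^ 2 * ‖y - yst‖ ^ 2 := by
    have h1 := hfLip x x yst y
    simp only [sub_self, norm_zero] at h1
    have h2 := sq_nonneg ‖gradY f x yst - gradY f x y‖
    rw [norm_sub_rev y yst]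
    nlinarith
  have hb : ‖(mixedD g x y) (vQ - vst)‖ ≤ L₁ * ‖vst - vQ‖ := by
    calc ‖(mixedD g x y) (vQ - vst)‖ ≤ ‖mixedD g x y‖ * ‖vQ - vst‖ :=
          (mixedD g x y).le_opNorm _
      _ ≤ L₁ * ‖vst - vQ‖ := by
          rw [norm_sub_rev]
          exact mul_le_mul_of_nonneg_right (hJb x y) (norm_nonneg _)
  have hc : ‖(mixedD g x y - mixedD g x yst) vst‖ ≤ L₂ * ‖y - yst‖ * Mv := by
    calc ‖(mixedD g x y - mixedD g x yst) vst‖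
        ≤ ‖mixedD g x y - mixedD g x yst‖ * ‖vst‖ :=
          (mixedD g x y - mixedD g x yst).le_opNorm _
      _ ≤ (L₂ * ‖y - yst‖) * Mv :=
          mul_le_mul (hJl x y yst) hvst (norm_nonneg _)
            (by positivity)
  have key : (gradX f x yst - mixedD g x yst vst) - (gradX f x y - mixedD g x y vQ)
      = (gradX f x yst - gradX f x y) + (mixedD g x y) (vQ - vst)
        + (mixedD g x y - mixedD g x yst) vst := by
    simp only [map_sub, ContinuousLinearMap.sub_apply]
    abel
  rw [key]
  set a := ‖gradX f x yst - gradX f x y‖ with hadef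
  set b := ‖(mixedD g x y) (vQ - vst)‖ with hbdef
  set c := ‖(mixedD g x y - mixedD g x yst) vst‖ with hcdef
  have hn := norm_add₃_le (a := gradX f x yst - gradX f x y)
    (b := (mixedD g x y) (vQ - vst)) (c := (mixedD g x y - mixedD g x yst) vst)
  have n1 : 0 ≤ a := norm_nonneg _
  have n2 : 0 ≤ b := norm_nonneg _
  have n3 : 0 ≤ c := norm_nonneg _
  have n4 := norm_nonneg (vst - vQ)
  have n5 := norm_nonneg (y - yst)
  have h1 : ‖gradX f x yst - gradX f x y + (mixedD g x y) (vQ - vst)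
      + (mixedD g x y - mixedD g x yst) vst‖ ^ 2 ≤ (a + b + c) ^ 2 :=
    pow_le_pow_left₀ (norm_nonneg _) hn 2
  have h2 : (a + b + c) ^ 2 ≤ 3 * a ^ 2 + 3 * b ^ 2 + 3 * c ^ 2 := by
    nlinarith [sq_nonneg (a - b), sq_nonneg (a - c), sq_nonneg (b - c)]
  have h3 : b ^ 2 ≤ L₁ ^ 2 * ‖vst - vQ‖ ^ 2 := by nlinarith
  have h4 : c ^ 2 ≤ L₂ ^ 2 * ‖y - yst‖ ^ 2 * Mv ^ 2 := by nlinarith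
  nlinarith
end

section
/- For the gradient-descent step y' := y − α∇_y g(x₂, y), any point z ∈ F, and any λ > 0: ‖y' − y*(x₂)‖² ≤ (1+λ)(1−αμ_g)‖y − z‖² + 2(1 + 1/λ)(1−αμ_g)‖z − y*(x₁)‖² + (2L₁²/μ_g²)(1 + 1/λ)(1−αμ_g)‖x₁ − x₂‖². -/
/-!
One gradient step on the strongly convex, `L₁`-smooth function `g x₂` contracts the squared
distance to its minimizer by the factor `1 - α μ_g`. The distance `‖y - y*(x₂)‖` is then split
through `z` and `y*(x₁)` by Young's inequality, and the last piece is controlled by the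
`L₁ / μ_g`-Lipschitz continuity of the minimizer map `y*`.
-/

open RealInnerProductSpace

open scoped Gradient

theorem norm_add_sq_le_weighted {F : Type*} [NormedAddCommGroup F] [InnerProductSpace ℝ F]
    (a b : F) {c : ℝ} (hc : 0 < c) :
    ‖a + b‖ ^ 2 ≤ (1 + c) * ‖a‖ ^ 2 + (1 + 1 / c) * ‖b‖ ^ 2 := by
  have hAMGM : 2 * (‖a‖ * ‖b‖) ≤ c * ‖a‖ ^ 2 + 1 / c * ‖b‖ ^ 2 := by
    have hsq : c * ‖a‖ ^ 2 + 1 / c * ‖b‖ ^ 2 - 2 * (‖a‖ * ‖b‖) = (c * ‖a‖ - ‖b‖) ^ 2 / c := by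
      field_simp
      ring
    linarith [show 0 ≤ (c * ‖a‖ - ‖b‖) ^ 2 / c by positivity]
  linarith [norm_add_sq_real a b, real_inner_le_norm a b]

section Gradient

variable {F : Type*} [NormedAddCommGroup F] [InnerProductSpace ℝ F] [CompleteSpace F]
  {f : F → ℝ}

theorem IsLocalMin.gradient_eq_zero {a : F} (h : IsLocalMin f a) : ∇ f a = 0 := by
  simp [gradient, h.fderiv_eq_zero]

theorem hasDerivAt_comp_add_smul (hf : Differentiable ℝ f) (y v : F) (t : ℝ) :
    HasDerivAt (fun s : ℝ => f (y + s • v)) ⟪∇ f (y + t • v), v⟫ t := by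
  have hline : HasDerivAt (fun s : ℝ => y + s • v) v t := by
    simpa using ((hasDerivAt_id t).smul_const v).const_add y
  have h := (hf (y + t • v)).hasGradientAt.hasFDerivAt.comp_hasDerivAt t hline
  rwa [InnerProductSpace.toDual_apply_apply] at h

theorem image_add_le_of_lipschitz_gradient (hf : Differentiable ℝ f) {L : ℝ}
    (hL : ∀ a b, ‖∇ f a - ∇ f b‖ ≤ L * ‖a - b‖) (y v : F) :
    f (y + v) ≤ f y + ⟪∇ f y, v⟫ + L / 2 * ‖v‖ ^ 2 := by
  let ψ : ℝ → ℝ := fun t => f (y + t • v) - ⟪∇ f y, v⟫ * t - L / 2 * ‖v‖ ^ 2 * t ^ 2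
  have hψ : ∀ t, HasDerivAt ψ (⟪∇ f (y + t • v) - ∇ f y, v⟫ - L * ‖v‖ ^ 2 * t) t := by
    intro t
    have hquad : HasDerivAt (fun t : ℝ => L / 2 * ‖v‖ ^ 2 * t ^ 2) (L * ‖v‖ ^ 2 * t) t := by
      refine ((hasDerivAt_pow 2 t).const_mul (L / 2 * ‖v‖ ^ 2)).congr_deriv ?_
      ring
    refine (((hasDerivAt_comp_add_smul hf y v t).sub
      ((hasDerivAt_id t).const_mul ⟪∇ f y, v⟫)).sub hquad).congr_deriv ?_
    rw [inner_sub_left]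
    ring
  have hanti : AntitoneOn ψ (Set.Ici 0) := by
    refine antitoneOn_of_hasDerivWithinAt_nonpos (convex_Ici 0)
      (fun t _ => (hψ t).continuousAt.continuousWithinAt)
      (fun t _ => (hψ t).hasDerivWithinAt) fun t ht => ?_
    rw [interior_Ici, Set.mem_Ioi] at ht
    have hdist : ‖y + t • v - y‖ = t * ‖v‖ := by simp [norm_smul, abs_of_pos ht]
    have hcs := (real_inner_le_norm _ v).trans
      (mul_le_mul_of_nonneg_right (hL (y + t • v) y) (norm_nonneg v))
    rw [hdist] at hcs
    linarith
  have h01 := hanti (Set.mem_Ici.2 le_rfl) (zero_le_one' ℝ) zero_le_one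
  simp only [ψ, zero_smul, add_zero, one_smul, mul_zero, mul_one, one_pow, sub_zero,
    ne_eq, OfNat.ofNat_ne_zero, not_false_eq_true, zero_pow] at h01
  linarith

variable {μ : ℝ} {y₀ : F}

theorem mul_sq_norm_sub_le_inner_gradient
    (hsc : ∀ y y', f y + ⟪∇ f y, y' - y⟫ + μ / 2 * ‖y' - y‖ ^ 2 ≤ f y')
    (hmin : ∀ y, f y₀ ≤ f y) (y : F) :
    μ * ‖y - y₀‖ ^ 2 ≤ ⟪∇ f y, y - y₀⟫ := by
  have hgrowth := hsc y₀ y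
  rw [(IsLocalMin.gradient_eq_zero (Filter.Eventually.of_forall hmin)), inner_zero_left] at hgrowth
  have hy := hsc y y₀
  rw [norm_sub_rev, ← neg_sub, inner_neg_right] at hy
  linarith

theorem norm_sub_smul_gradient_sub_sq_le
    (hsc : ∀ y y', f y + ⟪∇ f y, y' - y⟫ + μ / 2 * ‖y' - y‖ ^ 2 ≤ f y')
    (hmin : ∀ y, f y₀ ≤ f y) (hf : Differentiable ℝ f) {L α : ℝ}
    (hL : ∀ a b, ‖∇ f a - ∇ f b‖ ≤ L * ‖a - b‖) (hα : 0 ≤ α) (hαL : α * L ≤ 1) (y : F) :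
    ‖y - α • ∇ f y - y₀‖ ^ 2 ≤ (1 - α * μ) * ‖y - y₀‖ ^ 2 := by
  set G := ∇ f y
  have hdescent := image_add_le_of_lipschitz_gradient hf hL y (-(α • G))
  rw [← sub_eq_add_neg, inner_neg_right, real_inner_smul_right, real_inner_self_eq_norm_sq,
    norm_neg, norm_smul, Real.norm_of_nonneg hα] at hdescent
  have hy := hsc y y₀
  rw [norm_sub_rev, ← neg_sub, inner_neg_right, real_inner_comm] at hy
  have hexpand : ‖y - α • G - y₀‖ ^ 2
      = ‖y - y₀‖ ^ 2 - 2 * (α * ⟪y - y₀, G⟫) + α ^ 2 * ‖G‖ ^ 2 := by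
    rw [sub_right_comm, norm_sub_sq_real, real_inner_smul_right, norm_smul,
      Real.norm_of_nonneg hα, mul_pow]
  -- chain `f y₀ ≤ f (y - α G)` (minimality) with the descent lemma and strong convexity at `y`
  have hinner : α / 2 * ‖G‖ ^ 2 + μ / 2 * ‖y - y₀‖ ^ 2 ≤ ⟪y - y₀, G⟫ := by
    nlinarith [hmin (y - α • G), mul_nonneg (mul_nonneg (sub_nonneg.2 hαL) hα) (sq_nonneg ‖G‖)]
  rw [hexpand]
  nlinarith [mul_le_mul_of_nonneg_left hinner hα]

end Gradient

section Parametric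

variable {E F : Type*} [NormedAddCommGroup E] [InnerProductSpace ℝ E] [CompleteSpace E]
  [NormedAddCommGroup F] [InnerProductSpace ℝ F] [CompleteSpace F] {g : E → F → ℝ} {L : ℝ}

theorem norm_gradY_sub_gradY_le_snd (hL : 0 ≤ L)
    (hLip : ∀ x x' : E, ∀ y y' : F,
      ‖gradX g x y - gradX g x' y'‖ ^ 2 + ‖gradY g x y - gradY g x' y'‖ ^ 2
        ≤ L ^ 2 * (‖x - x'‖ ^ 2 + ‖y - y'‖ ^ 2)) (x : E) (y y' : F) :
    ‖gradY g x y - gradY g x y'‖ ≤ L * ‖y - y'‖ := by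
  have h := hLip x x y y'
  rw [sub_self, norm_zero] at h
  refine (pow_le_pow_iff_left₀ (norm_nonneg _) (by positivity) two_ne_zero).1 ?_
  nlinarith [sq_nonneg ‖gradX g x y - gradX g x y'‖]

theorem norm_gradY_sub_gradY_le_fst (hL : 0 ≤ L)
    (hLip : ∀ x x' : E, ∀ y y' : F,
      ‖gradX g x y - gradX g x' y'‖ ^ 2 + ‖gradY g x y - gradY g x' y'‖ ^ 2
        ≤ L ^ 2 * (‖x - x'‖ ^ 2 + ‖y - y'‖ ^ 2)) (x x' : E) (y : F) :
    ‖gradY g x y - gradY g x' y‖ ≤ L * ‖x - x'‖ := by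
  have h := hLip x x' y y
  rw [sub_self, norm_zero] at h
  refine (pow_le_pow_iff_left₀ (norm_nonneg _) (by positivity) two_ne_zero).1 ?_
  nlinarith [sq_nonneg ‖gradX g x y - gradX g x' y‖]

theorem norm_argmin_sub_le {μ : ℝ} (hμ : 0 < μ) (hL : 0 ≤ L) {ystar : E → F}
    (hsc : ∀ x : E, ∀ y y' : F,
      g x y + ⟪gradY g x y, y' - y⟫ + μ / 2 * ‖y' - y‖ ^ 2 ≤ g x y')
    (hmin : ∀ x : E, ∀ y : F, g x (ystar x) ≤ g x y)
    (hLx : ∀ x x' : E, ∀ y : F, ‖gradY g x y - gradY g x' y‖ ≤ L * ‖x - x'‖) (x₁ x₂ : E) :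
    ‖ystar x₁ - ystar x₂‖ ≤ L / μ * ‖x₁ - x₂‖ := by
  set Δ := ystar x₁ - ystar x₂
  have hmono : μ * ‖Δ‖ ^ 2 ≤ ⟪gradY g x₂ (ystar x₁), Δ⟫ :=
    mul_sq_norm_sub_le_inner_gradient (f := g x₂) (hsc x₂) (hmin x₂) (ystar x₁)
  have hopt : gradY g x₁ (ystar x₁) = 0 :=
    IsLocalMin.gradient_eq_zero (Filter.Eventually.of_forall (hmin x₁))
  have hinner : ⟪gradY g x₂ (ystar x₁), Δ⟫ ≤ L * ‖x₂ - x₁‖ * ‖Δ‖ :=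
    calc ⟪gradY g x₂ (ystar x₁), Δ⟫
        = ⟪gradY g x₂ (ystar x₁) - gradY g x₁ (ystar x₁), Δ⟫ := by rw [hopt, sub_zero]
      _ ≤ ‖gradY g x₂ (ystar x₁) - gradY g x₁ (ystar x₁)‖ * ‖Δ‖ := real_inner_le_norm _ _
      _ ≤ L * ‖x₂ - x₁‖ * ‖Δ‖ := by gcongr; exact hLx _ _ _
  rw [norm_sub_rev x₂] at hinner
  rw [div_mul_eq_mul_div, le_div_iff₀ hμ]
  rcases (norm_nonneg Δ).eq_or_lt with hΔ | hΔ
  · rw [← hΔ, zero_mul]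
    positivity
  · exact le_of_mul_le_mul_right (by nlinarith [hmono]) hΔ

end Parametric

/-- for the gradient-descent step `y' = y - α ∇_y g(x₂, y)`, any
`z ∈ F` and any `λ > 0`:
`‖y' - y*(x₂)‖² ≤ (1+λ)(1-αμ_g)‖y-z‖² + 2(1+1/λ)(1-αμ_g)‖z-y*(x₁)‖²
   + (2L₁²/μ_g²)(1+1/λ)(1-αμ_g)‖x₁-x₂‖²`. -/
theorem inner_step_error_decomposition
    {E : Type*} [NormedAddCommGroup E] [InnerProductSpace ℝ E] [FiniteDimensional ℝ E]
    {F : Type*} [NormedAddCommGroup F] [InnerProductSpace ℝ F] [FiniteDimensional ℝ F]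
    (L₁ μg α lam : ℝ) (hμg : 0 < μg) (hμL : μg ≤ L₁)
    (hα0 : 0 < α) (hα : α ≤ 1 / L₁) (hlam : 0 < lam)
    (g : E → F → ℝ)
    (hdiff : Differentiable ℝ (fun p : E × F => g p.1 p.2))
    (hLip : ∀ x x' : E, ∀ y y' : F,
      ‖gradX g x y - gradX g x' y'‖ ^ 2 + ‖gradY g x y - gradY g x' y'‖ ^ 2
        ≤ L₁ ^ 2 * (‖x - x'‖ ^ 2 + ‖y - y'‖ ^ 2))
    (ystar : E → F)
    (hsc : ∀ x : E, ∀ y y' : F,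
      g x y + ⟪gradY g x y, y' - y⟫ + μg / 2 * ‖y' - y‖ ^ 2 ≤ g x y')
    (hmin : ∀ x : E, ∀ y : F, g x (ystar x) ≤ g x y)
    (x₁ x₂ : E) (y z : F) :
    ‖(y - α • gradY g x₂ y) - ystar x₂‖ ^ 2
      ≤ (1 + lam) * (1 - α * μg) * ‖y - z‖ ^ 2
        + 2 * (1 + 1 / lam) * (1 - α * μg) * ‖z - ystar x₁‖ ^ 2
        + 2 * L₁ ^ 2 / μg ^ 2 * (1 + 1 / lam) * (1 - α * μg) * ‖x₁ - x₂‖ ^ 2 := by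
  have hL : 0 ≤ L₁ := hμg.le.trans hμL
  have hαL : α * L₁ ≤ 1 := (le_div_iff₀ (hμg.trans_le hμL)).1 hα
  have hαμ : 0 ≤ 1 - α * μg := by nlinarith
  have hstep := norm_sub_smul_gradient_sub_sq_le (f := g x₂) (hsc x₂) (hmin x₂)
    (hdiff.comp ((differentiable_const x₂).prodMk differentiable_id))
    (norm_gradY_sub_gradY_le_snd hL hLip x₂) hα0.le hαL y
  have hystar := norm_argmin_sub_le hμg hL hsc hmin (norm_gradY_sub_gradY_le_fst hL hLip) x₁ x₂
  have hsplit := norm_add_sq_le_weighted (y - z) (z - ystar x₂) hlam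
  have hsplit' := norm_add_sq_le_weighted (z - ystar x₁) (ystar x₁ - ystar x₂) one_pos
  rw [sub_add_sub_cancel] at hsplit hsplit'
  norm_num at hsplit'
  calc ‖(y - α • gradY g x₂ y) - ystar x₂‖ ^ 2
      ≤ (1 - α * μg) * ‖y - ystar x₂‖ ^ 2 := hstep
    _ ≤ (1 - α * μg) * ((1 + lam) * ‖y - z‖ ^ 2
          + (1 + 1 / lam) * (2 * ‖z - ystar x₁‖ ^ 2 + 2 * (L₁ / μg * ‖x₁ - x₂‖) ^ 2)) := by
        gcongr
        exact hsplit.trans (by gcongr; exact hsplit'.trans (by gcongr))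
    _ = _ := by ring
end

section
/- The composite function φ(x) := f(x, y*(x)) is differentiable, and its gradient is given by the hypergradient formula ∇φ(x) = ∇_x f(x, y*(x)) − A(x)* H(x)^{−1} ∇_y f(x, y*(x)), where A(x)* : F → E is the adjoint of A(x). -/
/-! Differentiating the optimality condition `∇_y g(x, y*(x)) = 0` along the graph of `y*` gives
`A + H ∘ Dy* = 0`, hence `Dy* = -H⁻¹ A`. The chain rule along the same graph gives
`∇φ = ∇ₓf + (Dy*)† ∇_y f`, and `(H⁻¹)† = H⁻¹` because `H` is self-adjoint. -/

open RealInnerProductSpace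

open ContinuousLinearMap Filter Topology

section Graph

variable {𝕜 : Type*} [NontriviallyNormedField 𝕜]
  {E : Type*} [NormedAddCommGroup E] [NormedSpace 𝕜 E]
  {F : Type*} [NormedAddCommGroup F] [NormedSpace 𝕜 F]
  {G : Type*} [NormedAddCommGroup G] [NormedSpace 𝕜 G]
  {f : E × F → G} {D : E × F →L[𝕜] G}

theorem HasFDerivAt.comp_prodMk_left {x : E} {y : F} (hf : HasFDerivAt f D (x, y)) :
    HasFDerivAt (fun u => f (u, y)) (D.comp (inl 𝕜 E F)) x :=
  hf.comp x (hasFDerivAt_prodMk_left x y)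

theorem HasFDerivAt.comp_prodMk_right {x : E} {y : F} (hf : HasFDerivAt f D (x, y)) :
    HasFDerivAt (fun v => f (x, v)) (D.comp (inr 𝕜 E F)) y :=
  hf.comp y (hasFDerivAt_prodMk_right x y)

theorem HasFDerivAt.comp_graph {γ : E → F} {T : E →L[𝕜] F} {x : E}
    (hf : HasFDerivAt f D (x, γ x)) (hγ : HasFDerivAt γ T x) :
    HasFDerivAt (fun u => f (u, γ u))
      (D.comp (inl 𝕜 E F) + (D.comp (inr 𝕜 E F)).comp T) x := by
  refine (hf.comp x ((hasFDerivAt_id x).prodMk hγ)).congr_fderiv ?_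
  ext1 h
  simp [← map_add]

theorem HasFDerivAt.eq_neg_comp_of_graph_eventually_eq_zero {γ : E → F} {T : E →L[𝕜] F}
    {x : E} (hf : HasFDerivAt f D (x, γ x)) (hγ : HasFDerivAt γ T x)
    (hzero : (fun u => f (u, γ u)) =ᶠ[𝓝 x] 0) {L : G →L[𝕜] F}
    (hL : L.comp (D.comp (inr 𝕜 E F)) = ContinuousLinearMap.id 𝕜 F) :
    T = -L.comp (D.comp (inl 𝕜 E F)) := by
  have hsum : D.comp (inl 𝕜 E F) + (D.comp (inr 𝕜 E F)).comp T = 0 :=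
    (hf.comp_graph hγ).unique ((hasFDerivAt_const 0 x).congr_of_eventuallyEq hzero)
  calc T = L.comp ((D.comp (inr 𝕜 E F)).comp T) := by rw [← comp_assoc, hL, id_comp]
    _ = -L.comp (D.comp (inl 𝕜 E F)) := by
      rw [eq_neg_of_add_eq_zero_right hsum, comp_neg]

end Graph

section Gradient

variable {E : Type*} [NormedAddCommGroup E] [InnerProductSpace ℝ E] [CompleteSpace E]
  {F : Type*} [NormedAddCommGroup F] [InnerProductSpace ℝ F] [CompleteSpace F]

theorem DifferentiableAt.hasGradientAt_comp_graph {f : E × F → ℝ} {γ : E → F}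
    {T : E →L[ℝ] F} {x : E} (hf : DifferentiableAt ℝ f (x, γ x)) (hγ : HasFDerivAt γ T x) :
    HasGradientAt (fun u => f (u, γ u))
      (gradient (fun u => f (u, γ x)) x + adjoint T (gradient (fun v => f (x, v)) (γ x))) x := by
  set D := fderiv ℝ f (x, γ x)
  have hD : HasFDerivAt f D (x, γ x) := hf.hasFDerivAt
  have hleft : InnerProductSpace.toDual ℝ E (gradient (fun u => f (u, γ x)) x) =
      D.comp (inl ℝ E F) :=
    hD.comp_prodMk_left.differentiableAt.hasGradientAt.hasFDerivAt.unique hD.comp_prodMk_left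
  have hright : InnerProductSpace.toDual ℝ F (gradient (fun v => f (x, v)) (γ x)) =
      D.comp (inr ℝ E F) :=
    hD.comp_prodMk_right.differentiableAt.hasGradientAt.hasFDerivAt.unique hD.comp_prodMk_right
  rw [hasGradientAt_iff_hasFDerivAt]
  refine (hD.comp_graph hγ).congr_fderiv ?_
  ext1 h
  rw [← hleft, ← hright]
  simp only [add_apply, comp_apply, InnerProductSpace.toDual_apply_apply, inner_add_left,
    adjoint_inner_left]

end Gradient

/-- the composite function `φ(x) = f(x, y*(x))` is differentiable
and its gradient is given by the hypergradient formula
`∇φ(x) = ∇ₓf(x,y*(x)) - A(x)* H(x)⁻¹ ∇_y f(x,y*(x))`, where `A(x)` is the partial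
derivative in `x` of `x' ↦ ∇_y g(x', y)` at `(x, y*(x))`, and `H(x)` is the Hessian
of `g(x,·)` at `y*(x)`, assumed self-adjoint and invertible (with inverse `Hinv x`). -/
theorem hypergradient_formula
    {E : Type*} [NormedAddCommGroup E] [InnerProductSpace ℝ E] [FiniteDimensional ℝ E]
    {F : Type*} [NormedAddCommGroup F] [InnerProductSpace ℝ F] [FiniteDimensional ℝ F]
    (f g : E → F → ℝ)
    (hf : Differentiable ℝ (fun p : E × F => f p.1 p.2))
    (hgy : Differentiable ℝ (fun p : E × F => gradY g p.1 p.2))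
    (ystar : E → F) (hystar : Differentiable ℝ ystar)
    (hopt : ∀ x : E, gradY g x (ystar x) = 0)
    (A : E → (E →L[ℝ] F))
    (hA : ∀ x : E, A x = fderiv ℝ (fun u => gradY g u (ystar x)) x)
    (H : E → (F →L[ℝ] F))
    (hH : ∀ x : E, H x = fderiv ℝ (fun v => gradY g x v) (ystar x))
    (hself : ∀ x : E, ∀ v w : F, ⟪(H x) v, w⟫ = ⟪v, (H x) w⟫)
    (Hinv : E → (F →L[ℝ] F))
    (hinv1 : ∀ x : E, (H x).comp (Hinv x) = ContinuousLinearMap.id ℝ F)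
    (hinv2 : ∀ x : E, (Hinv x).comp (H x) = ContinuousLinearMap.id ℝ F) :
    Differentiable ℝ (fun x => f x (ystar x)) ∧
      ∀ x : E, gradient (fun u => f u (ystar u)) x
        = gradX f x (ystar x)
          - (ContinuousLinearMap.adjoint (A x)) ((Hinv x) (gradY f x (ystar x))) := by
  have hγ : ∀ x, HasFDerivAt ystar (fderiv ℝ ystar x) x := fun x => (hystar x).hasFDerivAt
  have hφ : ∀ x, HasGradientAt (fun u => f u (ystar u))
      (gradX f x (ystar x) + adjoint (fderiv ℝ ystar x) (gradY f x (ystar x))) x :=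
    fun x => (hf (x, ystar x)).hasGradientAt_comp_graph (hγ x)
  refine ⟨fun x => (hφ x).differentiableAt, fun x => ?_⟩
  set D := fderiv ℝ (fun p : E × F => gradY g p.1 p.2) (x, ystar x)
  have hD : HasFDerivAt (fun p : E × F => gradY g p.1 p.2) D (x, ystar x) := (hgy _).hasFDerivAt
  have hAx : A x = D.comp (inl ℝ E F) := (hA x).trans hD.comp_prodMk_left.fderiv
  have hHx : H x = D.comp (inr ℝ E F) := (hH x).trans hD.comp_prodMk_right.fderiv
  have hT : fderiv ℝ ystar x = -(Hinv x).comp (A x) := by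
    rw [hAx]
    exact hD.eq_neg_comp_of_graph_eventually_eq_zero (hγ x) (Eventually.of_forall hopt)
      (hHx ▸ hinv2 x)
  have hHinv : adjoint (Hinv x) = Hinv x := by
    let : Invertible (H x) := ⟨Hinv x, hinv2 x, hinv1 x⟩
    have hHself : IsSelfAdjoint (H x) := isSelfAdjoint_iff_isSymmetric.mpr (hself x)
    exact ((IsSelfAdjoint.invOf_iff (H x)).mpr hHself).adjoint_eq
  rw [(hφ x).gradient, hT, map_neg, adjoint_comp, hHinv, neg_apply, comp_apply, sub_eq_add_neg]
end

section
/- There exists a constant L_f > 0, depending only on L₀, L₁, L₂ and μ_g, such that the composite function x ↦ f(x, y*(x)) is differentiable with L_f-Lipschitz gradient on E. -/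
open RealInnerProductSpace

/-- The Hessian `∇_y² g (x,y) : F →L[ℝ] F` of `g(x,·)` at `y`. -/
noncomputable def hessY {E F : Type*}
    [NormedAddCommGroup E] [InnerProductSpace ℝ E] [CompleteSpace E]
    [NormedAddCommGroup F] [InnerProductSpace ℝ F] [CompleteSpace F]
    (g : E → F → ℝ) (x : E) (y : F) : F →L[ℝ] F :=
  fderiv ℝ (fun v => gradY g x v) y

/-!
Strong convexity makes `∇_y g(x, ·)` strongly monotone. Hence `y*` is `(L₁/μ)`-Lipschitz and the
Hessian `∇_y² g` is coercive, so it is invertible with inverse of norm at most `1/μ`. Because `y*`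
is already Lipschitz, the identity `∇_y g(x, y*(x)) = 0` can be differentiated without the implicit
function theorem: `∇y* = -[∇_y² g]⁻¹ (∇ₓ∇_y g)ᵀ`. The chain rule then gives
`∇φ(x) = ∇ₓf + (∇y*)ᵀ ∇_y f`, evaluated at `(x, y*(x))`. Every factor is bounded and Lipschitz along
the graph of `y*`, whose increments are at most `(1 + L₁/μ) ‖x - x'‖`. Multiplying out gives
`L_f = (1 + L₁/μ)² (L₁ + L₀ L₂ / μ)`.
-/

open Asymptotics Filter Topology ContinuousLinearMap

theorem le_mul_sqrt_of_sq_add_sq_le {a b L s : ℝ} (hL : 0 ≤ L)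
    (h : a ^ 2 + b ^ 2 ≤ L ^ 2 * s) : a ≤ L * √s := by
  rw [← Real.sqrt_sq hL, ← Real.sqrt_mul (sq_nonneg L)]
  exact Real.le_sqrt_of_sq_le (by nlinarith [sq_nonneg b])

theorem sqrt_sq_add_sq_le {a b κ : ℝ} (ha : 0 ≤ a) (hb : 0 ≤ b) (hba : b ≤ κ * a) :
    √(a ^ 2 + b ^ 2) ≤ (1 + κ) * a :=
  Real.sqrt_le_iff.mpr ⟨by nlinarith, by nlinarith⟩

section Operators

variable {𝕜 E F G : Type*} [NontriviallyNormedField 𝕜]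
  [NormedAddCommGroup E] [NormedSpace 𝕜 E] [NormedAddCommGroup F] [NormedSpace 𝕜 F]
  [NormedAddCommGroup G] [NormedSpace 𝕜 G]

theorem ContinuousLinearMap.norm_apply_sub_apply_le (A A' : E →L[𝕜] F) (v v' : E) :
    ‖A v - A' v'‖ ≤ ‖A‖ * ‖v - v'‖ + ‖A - A'‖ * ‖v'‖ := calc
  ‖A v - A' v'‖ = ‖A (v - v') + (A - A') v'‖ := by simp
  _ ≤ ‖A‖ * ‖v - v'‖ + ‖A - A'‖ * ‖v'‖ := norm_add_le_of_le (A.le_opNorm _) ((A - A').le_opNorm _)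

theorem ContinuousLinearMap.norm_comp_sub_comp_le (A A' : F →L[𝕜] G) (B B' : E →L[𝕜] F) :
    ‖A ∘L B - A' ∘L B'‖ ≤ ‖A‖ * ‖B - B'‖ + ‖A - A'‖ * ‖B'‖ := calc
  ‖A ∘L B - A' ∘L B'‖ = ‖A ∘L (B - B') + (A - A') ∘L B'‖ := by
    rw [comp_sub, sub_comp]; abel_nf
  _ ≤ ‖A‖ * ‖B - B'‖ + ‖A - A'‖ * ‖B'‖ :=
    norm_add_le_of_le (opNorm_comp_le _ _) (opNorm_comp_le _ _)

theorem ContinuousLinearMap.IsInvertible.inverse_sub_inverse {T T' : E →L[𝕜] F}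
    (hT : T.IsInvertible) (hT' : T'.IsInvertible) :
    T.inverse - T'.inverse = T.inverse ∘L (T' - T) ∘L T'.inverse := by
  rw [sub_comp, comp_sub, hT'.self_comp_inverse, ← comp_assoc, hT.inverse_comp_self,
    comp_id, id_comp]

end Operators

section Coercive

variable {F : Type*} [NormedAddCommGroup F] [InnerProductSpace ℝ F]
  {T : F →L[ℝ] F} {μ : ℝ}

theorem mul_norm_le_norm_apply_of_coercive (hT : ∀ v, μ * ‖v‖ ^ 2 ≤ ⟪T v, v⟫) (v : F) :
    μ * ‖v‖ ≤ ‖T v‖ := by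
  rcases (norm_nonneg v).eq_or_lt with hv | hv
  · simp [← hv]
  · refine le_of_mul_le_mul_right ?_ hv
    nlinarith [hT v, real_inner_le_norm (T v) v]

theorem isInvertible_of_coercive [CompleteSpace F] (hμ : 0 < μ)
    (hT : ∀ v, μ * ‖v‖ ^ 2 ≤ ⟪T v, v⟫) : T.IsInvertible := by
  have hB : IsCoercive ((innerSL ℝ : F →L[ℝ] F →L[ℝ] ℝ) ∘L T) :=
    ⟨μ, hμ, fun v => by rw [mul_assoc, ← sq]; exact hT v⟩
  refine ⟨hB.continuousLinearEquivOfBilin, ?_⟩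
  ext v
  exact ext_inner_right ℝ (hB.continuousLinearEquivOfBilin_apply v)

theorem norm_inverse_le_of_coercive [CompleteSpace F] (hμ : 0 < μ)
    (hT : ∀ v, μ * ‖v‖ ^ 2 ≤ ⟪T v, v⟫) : ‖T.inverse‖ ≤ μ⁻¹ := by
  refine opNorm_le_bound _ (inv_nonneg.mpr hμ.le) fun w => ?_
  rw [inv_mul_eq_div, le_div_iff₀' hμ]
  simpa [(isInvertible_of_coercive hμ hT).self_apply_inverse] using
    mul_norm_le_norm_apply_of_coercive hT (T.inverse w)

end Coercive

section StrongMonotone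

variable {E F : Type*} [NormedAddCommGroup E] [NormedAddCommGroup F] [InnerProductSpace ℝ F]
  {μ : ℝ}

theorem mul_norm_sq_le_inner_of_strongConvex {h : F → ℝ} {G : F → F}
    (hsc : ∀ y y', h y + ⟪G y, y' - y⟫ + μ / 2 * ‖y' - y‖ ^ 2 ≤ h y') (y y' : F) :
    μ * ‖y' - y‖ ^ 2 ≤ ⟪G y' - G y, y' - y⟫ := by
  have h₁ := hsc y y'
  have h₂ := hsc y' y
  rw [norm_sub_rev, ← neg_sub y' y, inner_neg_right] at h₂
  rw [inner_sub_left]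
  linarith

theorem mul_norm_sq_le_inner_fderiv {Φ : F → F} {H : F →L[ℝ] F} {y : F} (hΦ : HasFDerivAt Φ H y)
    (hmono : ∀ w, μ * ‖w - y‖ ^ 2 ≤ ⟪Φ w - Φ y, w - y⟫) (v : F) :
    μ * ‖v‖ ^ 2 ≤ ⟪H v, v⟫ := by
  have hline : HasDerivAt (fun t : ℝ => y + t • v) v 0 := by
    simpa using ((hasDerivAt_id (0 : ℝ)).smul_const v).const_add y
  have hψ : HasDerivAt (fun t : ℝ => ⟪Φ (y + t • v), v⟫) ⟪H v, v⟫ 0 := by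
    have hΦ' : HasFDerivAt Φ H (y + (0 : ℝ) • v) := by simpa using hΦ
    simpa using (hΦ'.comp_hasDerivAt 0 hline).inner ℝ (hasDerivAt_const 0 v)
  refine ge_of_tendsto hψ.tendsto_slope_zero_right (eventually_nhdsWithin_of_forall fun t ht => ?_)
  have ht : (0 : ℝ) < t := ht
  have hw := hmono (y + t • v)
  rw [add_sub_cancel_left, norm_smul, inner_smul_right, Real.norm_of_nonneg ht.le] at hw
  rw [zero_add, zero_smul, add_zero, smul_eq_mul, ← inner_sub_left, le_inv_mul_iff₀ ht]
  nlinarith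

theorem norm_sub_le_of_strongMonotone {Φ : E → F → F} {y : E → F} {L : ℝ} (hμ : 0 < μ)
    (hzero : ∀ x, Φ x (y x) = 0)
    (hmono : ∀ x y₁ y₂, μ * ‖y₂ - y₁‖ ^ 2 ≤ ⟪Φ x y₂ - Φ x y₁, y₂ - y₁⟫)
    (hlip : ∀ x x' v, ‖Φ x v - Φ x' v‖ ≤ L * ‖x - x'‖) (x x' : E) :
    ‖y x - y x'‖ ≤ L / μ * ‖x - x'‖ := by
  rw [div_mul_eq_mul_div, le_div_iff₀' hμ]
  rcases (norm_nonneg (y x - y x')).eq_or_lt with hd | hd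
  · rw [← hd, mul_zero]
    exact (norm_nonneg _).trans (hlip x x' (y x))
  refine le_of_mul_le_mul_right ?_ hd
  calc μ * ‖y x - y x'‖ * ‖y x - y x'‖ ≤ ⟪Φ x' (y x) - Φ x' (y x'), y x - y x'⟫ := by
        nlinarith [hmono x' (y x') (y x)]
    _ = ⟪Φ x' (y x) - Φ x (y x), y x - y x'⟫ := by simp only [hzero, sub_zero]
    _ ≤ ‖Φ x' (y x) - Φ x (y x)‖ * ‖y x - y x'‖ := real_inner_le_norm _ _
    _ ≤ L * ‖x - x'‖ * ‖y x - y x'‖ := by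
        gcongr; rw [norm_sub_rev x]; exact hlip x' x (y x)

end StrongMonotone

section Partial

variable {𝕜 E F G : Type*} [NontriviallyNormedField 𝕜]
  [NormedAddCommGroup E] [NormedSpace 𝕜 E] [NormedAddCommGroup F] [NormedSpace 𝕜 F]
  [NormedAddCommGroup G] [NormedSpace 𝕜 G] {Φ : E → F → G} {x : E}

section Point

variable {y : F}

theorem DifferentiableAt.hasFDerivAt_uncurry_left
    (hΦ : DifferentiableAt 𝕜 (fun p : E × F => Φ p.1 p.2) (x, y)) :
    HasFDerivAt (fun u => Φ u y) (fderiv 𝕜 (fun p : E × F => Φ p.1 p.2) (x, y) ∘L inl 𝕜 E F) x :=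
  (hΦ.hasFDerivAt.comp x (hasFDerivAt_prodMk_left (𝕜 := 𝕜) x y) :)

theorem DifferentiableAt.hasFDerivAt_uncurry_right
    (hΦ : DifferentiableAt 𝕜 (fun p : E × F => Φ p.1 p.2) (x, y)) :
    HasFDerivAt (fun v => Φ x v) (fderiv 𝕜 (fun p : E × F => Φ p.1 p.2) (x, y) ∘L inr 𝕜 E F) y :=
  hΦ.hasFDerivAt.comp y (hasFDerivAt_prodMk_right x y)

theorem DifferentiableAt.fderiv_uncurry_apply
    (hΦ : DifferentiableAt 𝕜 (fun p : E × F => Φ p.1 p.2) (x, y)) (h : E) (k : F) :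
    fderiv 𝕜 (fun p : E × F => Φ p.1 p.2) (x, y) (h, k)
      = fderiv 𝕜 (fun u => Φ u y) x h + fderiv 𝕜 (fun v => Φ x v) y k := by
  rw [hΦ.hasFDerivAt_uncurry_left.fderiv, hΦ.hasFDerivAt_uncurry_right.fderiv, comp_apply,
    comp_apply, ← map_add, inl_apply, inr_apply, Prod.mk_add_mk, add_zero, zero_add]

end Point

/-- Unlike the implicit function theorem, this takes the solution map `y` as given and
Lipschitz at `x`; then a left inverse of `∂_y Φ` suffices. -/
theorem hasFDerivAt_of_uncurry_eq_zero {y : E → F} {S : G →L[𝕜] F}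
    (hΦ : DifferentiableAt 𝕜 (fun p : E × F => Φ p.1 p.2) (x, y x))
    (hzero : ∀ u, Φ u (y u) = 0) (hy : (fun u => y u - y x) =O[𝓝 x] fun u => u - x)
    (hS : S ∘L fderiv 𝕜 (fun v => Φ x v) (y x) = .id 𝕜 F) :
    HasFDerivAt y (-(S ∘L fderiv 𝕜 (fun u => Φ u (y x)) x)) x := by
  set A := fderiv 𝕜 (fun p : E × F => Φ p.1 p.2) (x, y x)
  have hgraph : (fun u => (u, y u) - (x, y x)) =O[𝓝 x] fun u => u - x :=
    (isBigO_refl _ _).prod_left hy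
  have hcont : Tendsto (fun u => (u, y u)) (𝓝 x) (𝓝 (x, y x)) :=
    tendsto_sub_nhds_zero_iff.mp (hgraph.trans_tendsto (tendsto_sub_nhds_zero_iff.mpr tendsto_id))
  have hlin : (fun u => A ((u, y u) - (x, y x))) =o[𝓝 x] fun u => u - x := by
    have := (hΦ.hasFDerivAt.isLittleO.comp_tendsto hcont).trans_isBigO hgraph
    simpa only [Function.comp_def, hzero, sub_self, zero_sub, neg_neg] using this.neg_left
  refine .of_isLittleO (((S.isBigO_comp _ _).trans_isLittleO hlin).congr_left fun u => ?_)
  have hAu : A ((u, y u) - (x, y x)) = fderiv 𝕜 (fun u => Φ u (y x)) x (u - x)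
      + fderiv 𝕜 (fun v => Φ x v) (y x) (y u - y x) :=
    hΦ.fderiv_uncurry_apply _ _
  rw [hAu, map_add, ← S.comp_apply (fderiv 𝕜 (fun v => Φ x v) (y x)), hS]
  simp only [neg_apply, comp_apply, id_apply]
  abel

end Partial

section ChainRule

variable {E F : Type*} [NormedAddCommGroup E] [InnerProductSpace ℝ E] [CompleteSpace E]
  [NormedAddCommGroup F] [InnerProductSpace ℝ F] [CompleteSpace F]

theorem hasGradientAt_comp_uncurry {f : E → F → ℝ} {y : E → F} {D : E →L[ℝ] F} {x : E}
    (hf : DifferentiableAt ℝ (fun p : E × F => f p.1 p.2) (x, y x)) (hy : HasFDerivAt y D x) :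
    HasGradientAt (fun u => f u (y u)) (gradX f x (y x) + D.adjoint (gradY f x (y x))) x := by
  have hcomp : HasFDerivAt (fun u => f u (y u))
      (fderiv ℝ (fun p : E × F => f p.1 p.2) (x, y x) ∘L (ContinuousLinearMap.id ℝ E).prod D) x :=
    (hf.hasFDerivAt.comp x ((hasFDerivAt_id x).prodMk hy) :)
  convert hasFDerivAt_iff_hasGradientAt.mp hcomp using 1
  refine ext_inner_right ℝ fun h => ?_
  rw [InnerProductSpace.toDual_symm_apply, comp_apply, prod_apply, id_apply,
    hf.fderiv_uncurry_apply, inner_add_left, adjoint_inner_left, gradX, gradY,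
    inner_gradient_left, inner_gradient_left]

theorem norm_gradient_le_of_lipschitz {φ : F → ℝ} {y : F} {L : ℝ} (hφ : DifferentiableAt ℝ φ y)
    (hL : 0 ≤ L) (hlip : ∀ v, |φ v - φ y| ≤ L * ‖v - y‖) : ‖gradient φ y‖ ≤ L := by
  rw [gradient, LinearIsometryEquiv.norm_map]
  exact hφ.hasFDerivAt.le_of_lip' hL (.of_forall hlip)

theorem norm_add_adjoint_apply_sub_le (a a' : E) (D D' : E →L[ℝ] F) (w w' : F) :
    ‖(a + D.adjoint w) - (a' + D'.adjoint w')‖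
      ≤ ‖a - a'‖ + ‖D‖ * ‖w - w'‖ + ‖D - D'‖ * ‖w'‖ := calc
  _ = ‖(a - a') + (D.adjoint w - D'.adjoint w')‖ := by abel_nf
  _ ≤ ‖a - a'‖ + ‖D.adjoint w - D'.adjoint w'‖ := norm_add_le _ _
  _ ≤ ‖a - a'‖ + (‖D‖ * ‖w - w'‖ + ‖D - D'‖ * ‖w'‖) := by
    gcongr
    simpa [← map_sub] using norm_apply_sub_apply_le D.adjoint D'.adjoint w w'
  _ = _ := by ring

end ChainRule

section Perturbation

variable {E F : Type*} [NormedAddCommGroup E] [NormedSpace ℝ E]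
  [NormedAddCommGroup F] [InnerProductSpace ℝ F] [CompleteSpace F]
  {H H' : F →L[ℝ] F} {B B' : E →L[ℝ] F} {μ L ε : ℝ}

theorem norm_inverse_comp_le_of_coercive (hμ : 0 < μ) (hH : ∀ v, μ * ‖v‖ ^ 2 ≤ ⟪H v, v⟫)
    (hB : ‖B‖ ≤ L) : ‖H.inverse ∘L B‖ ≤ L / μ := calc
  ‖H.inverse ∘L B‖ ≤ μ⁻¹ * L :=
    (opNorm_comp_le _ _).trans (mul_le_mul (norm_inverse_le_of_coercive hμ hH) hB
      (norm_nonneg _) (inv_nonneg.mpr hμ.le))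
  _ = L / μ := inv_mul_eq_div _ _

theorem norm_inverse_comp_sub_inverse_comp_le_of_coercive (hμ : 0 < μ)
    (hH : ∀ v, μ * ‖v‖ ^ 2 ≤ ⟪H v, v⟫) (hH' : ∀ v, μ * ‖v‖ ^ 2 ≤ ⟪H' v, v⟫)
    (hB' : ‖B'‖ ≤ L) (hBB : ‖B - B'‖ ≤ ε) (hHH : ‖H - H'‖ ≤ ε) :
    ‖H.inverse ∘L B - H'.inverse ∘L B'‖ ≤ (1 + L / μ) * (ε / μ) := by
  have hS := norm_inverse_le_of_coercive hμ hH
  have hS' := norm_inverse_le_of_coercive hμ hH'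
  have hε : 0 ≤ ε := (norm_nonneg _).trans hHH
  have hSS : ‖H.inverse - H'.inverse‖ ≤ μ⁻¹ * ε * μ⁻¹ := by
    rw [(isInvertible_of_coercive hμ hH).inverse_sub_inverse (isInvertible_of_coercive hμ hH')]
    refine (opNorm_comp_le _ _).trans ?_
    rw [mul_assoc]
    gcongr
    refine (opNorm_comp_le _ _).trans ?_
    gcongr
    rwa [norm_sub_rev]
  calc ‖H.inverse ∘L B - H'.inverse ∘L B'‖
      ≤ ‖H.inverse‖ * ‖B - B'‖ + ‖H.inverse - H'.inverse‖ * ‖B'‖ := norm_comp_sub_comp_le ..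
    _ ≤ μ⁻¹ * ε + μ⁻¹ * ε * μ⁻¹ * L := by gcongr
    _ = (1 + L / μ) * (ε / μ) := by field_simp

end Perturbation

section Bilevel

variable {E F : Type*} [NormedAddCommGroup E] [InnerProductSpace ℝ E] [CompleteSpace E]
  [NormedAddCommGroup F] [InnerProductSpace ℝ F] [CompleteSpace F]
  {f g : E → F → ℝ} {ystar : E → F} {L₀ L₁ L₂ μ : ℝ}

theorem differentiable_gradY_of_contDiff (hg : ContDiff ℝ 2 (fun p : E × F => g p.1 p.2)) :
    Differentiable ℝ (fun p : E × F => gradY g p.1 p.2) := by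
  have hgradY : (fun p : E × F => gradY g p.1 p.2) = fun p =>
      (InnerProductSpace.toDual ℝ F).symm
        (fderiv ℝ (fun p : E × F => g p.1 p.2) p ∘L inr ℝ E F) := by
    funext p
    rw [gradY, gradient, (hg.differentiable two_ne_zero p).hasFDerivAt_uncurry_right.fderiv]
  rw [hgradY]
  exact (InnerProductSpace.toDual ℝ F).symm.differentiable.comp
    (((hg.fderiv_right le_rfl).differentiable one_ne_zero).clm_comp (differentiable_const _))

theorem norm_gradY_le_of_lipschitz (hf : Differentiable ℝ (fun p : E × F => f p.1 p.2))
    (hL₀ : 0 ≤ L₀) (hlip : ∀ x x' y y', |f x y - f x' y'| ≤ L₀ * √(‖x - x'‖ ^ 2 + ‖y - y'‖ ^ 2))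
    (x : E) (y : F) : ‖gradY f x y‖ ≤ L₀ :=
  norm_gradient_le_of_lipschitz (hf (x, y)).hasFDerivAt_uncurry_right.differentiableAt hL₀
    fun v => by simpa using hlip x x v y

theorem norm_gradX_sub_le_of_sq (hL : 0 ≤ L₁) (hgrad : ∀ x x' y y',
      ‖gradX f x y - gradX f x' y'‖ ^ 2 + ‖gradY f x y - gradY f x' y'‖ ^ 2
        ≤ L₁ ^ 2 * (‖x - x'‖ ^ 2 + ‖y - y'‖ ^ 2)) (x x' : E) (y y' : F) :
    ‖gradX f x y - gradX f x' y'‖ ≤ L₁ * √(‖x - x'‖ ^ 2 + ‖y - y'‖ ^ 2) :=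
  le_mul_sqrt_of_sq_add_sq_le hL (hgrad x x' y y')

theorem norm_gradY_sub_le_of_sq (hL : 0 ≤ L₁) (hgrad : ∀ x x' y y',
      ‖gradX f x y - gradX f x' y'‖ ^ 2 + ‖gradY f x y - gradY f x' y'‖ ^ 2
        ≤ L₁ ^ 2 * (‖x - x'‖ ^ 2 + ‖y - y'‖ ^ 2)) (x x' : E) (y y' : F) :
    ‖gradY f x y - gradY f x' y'‖ ≤ L₁ * √(‖x - x'‖ ^ 2 + ‖y - y'‖ ^ 2) :=
  le_mul_sqrt_of_sq_add_sq_le hL ((add_comm _ _).trans_le (hgrad x x' y y'))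

/-- The paper's `∇y*(x)`. -/
noncomputable def implicitDeriv (g : E → F → ℝ) (ystar : E → F) (x : E) : E →L[ℝ] F :=
  -((hessY g x (ystar x)).inverse ∘L (mixedD g x (ystar x)).adjoint)

theorem hasFDerivAt_implicitDeriv {K : ℝ} (hμ : 0 < μ)
    (hΦ : Differentiable ℝ (fun p : E × F => gradY g p.1 p.2))
    (hcrit : ∀ u, gradY g u (ystar u) = 0) (hlip : ∀ u x, ‖ystar u - ystar x‖ ≤ K * ‖u - x‖)
    (x : E) (hcoer : ∀ v, μ * ‖v‖ ^ 2 ≤ ⟪hessY g x (ystar x) v, v⟫) :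
    HasFDerivAt ystar (implicitDeriv g ystar x) x := by
  rw [implicitDeriv, mixedD, adjoint_adjoint]
  exact hasFDerivAt_of_uncurry_eq_zero (hΦ _) hcrit (.of_bound K (.of_forall (hlip · x)))
    (isInvertible_of_coercive hμ hcoer).inverse_comp_self

theorem norm_adjoint_mixedD_le (hΦ : Differentiable ℝ (fun p : E × F => gradY g p.1 p.2))
    (hL : 0 ≤ L₁) (hlip : ∀ x x' y, ‖gradY g x y - gradY g x' y‖ ≤ L₁ * ‖x - x'‖) (x : E) (y : F) :
    ‖(mixedD g x y).adjoint‖ ≤ L₁ := by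
  rw [mixedD, adjoint_adjoint]
  exact (hΦ (x, y)).hasFDerivAt_uncurry_left.differentiableAt.hasFDerivAt.le_of_lip' hL
    (.of_forall fun u => hlip u x y)

theorem norm_hypergradient_sub_le (hμ : 0 < μ) (hL₁ : 0 ≤ L₁) (hfgrad : ∀ x x' y y',
      ‖gradX f x y - gradX f x' y'‖ ^ 2 + ‖gradY f x y - gradY f x' y'‖ ^ 2
        ≤ L₁ ^ 2 * (‖x - x'‖ ^ 2 + ‖y - y'‖ ^ 2))
    (hfY : ∀ x y, ‖gradY f x y‖ ≤ L₀) (hB : ∀ x y, ‖(mixedD g x y).adjoint‖ ≤ L₁)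
    (hmixed : ∀ x x' y y', ‖mixedD g x y - mixedD g x' y'‖ ≤ L₂ * √(‖x - x'‖ ^ 2 + ‖y - y'‖ ^ 2))
    (hhess : ∀ x x' y y', ‖hessY g x y - hessY g x' y'‖ ≤ L₂ * √(‖x - x'‖ ^ 2 + ‖y - y'‖ ^ 2))
    (hcoer : ∀ x v, μ * ‖v‖ ^ 2 ≤ ⟪hessY g x (ystar x) v, v⟫) (x x' : E) :
    ‖(gradX f x (ystar x) + (implicitDeriv g ystar x).adjoint (gradY f x (ystar x)))
      - (gradX f x' (ystar x') + (implicitDeriv g ystar x').adjoint (gradY f x' (ystar x')))‖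
      ≤ (1 + L₁ / μ) * (L₁ + L₀ * L₂ / μ) * √(‖x - x'‖ ^ 2 + ‖ystar x - ystar x'‖ ^ 2) := by
  set r := √(‖x - x'‖ ^ 2 + ‖ystar x - ystar x'‖ ^ 2)
  have hD : ‖implicitDeriv g ystar x‖ ≤ L₁ / μ := by
    rw [implicitDeriv, norm_neg]
    exact norm_inverse_comp_le_of_coercive hμ (hcoer x) (hB _ _)
  have hDD : ‖implicitDeriv g ystar x - implicitDeriv g ystar x'‖
      ≤ (1 + L₁ / μ) * (L₂ * r / μ) := by
    rw [implicitDeriv, implicitDeriv, neg_sub_neg, norm_sub_rev]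
    refine norm_inverse_comp_sub_inverse_comp_le_of_coercive hμ (hcoer x) (hcoer x') (hB _ _) ?_
      (hhess _ _ _ _)
    rw [← map_sub, LinearIsometryEquiv.norm_map]
    exact hmixed _ _ _ _
  calc _ ≤ ‖gradX f x (ystar x) - gradX f x' (ystar x')‖
        + ‖implicitDeriv g ystar x‖ * ‖gradY f x (ystar x) - gradY f x' (ystar x')‖
        + ‖implicitDeriv g ystar x - implicitDeriv g ystar x'‖ * ‖gradY f x' (ystar x')‖ :=
      norm_add_adjoint_apply_sub_le ..
    _ ≤ L₁ * r + L₁ / μ * (L₁ * r) + (1 + L₁ / μ) * (L₂ * r / μ) * L₀ := by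
      have hDD₀ := (norm_nonneg _).trans hDD
      gcongr
      · exact norm_gradX_sub_le_of_sq hL₁ hfgrad ..
      · exact norm_gradY_sub_le_of_sq hL₁ hfgrad ..
      · exact hfY ..
    _ = (1 + L₁ / μ) * (L₁ + L₀ * L₂ / μ) * r := by ring

end Bilevel

/-- there is a constant `L_f > 0` depending only on `L₀, L₁, L₂, μ_g`
such that, for any data satisfying the standing assumptions, the composite map
`x ↦ f(x, y*(x))` is differentiable with `L_f`-Lipschitz gradient. -/
theorem composite_smoothness
    (L₀ L₁ L₂ μg : ℝ) (hL₀ : 0 < L₀) (hL₁ : 0 < L₁) (hL₂ : 0 < L₂) (hμg : 0 < μg) :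
    ∃ Lf > (0 : ℝ), ∀ (E F : Type)
      [NormedAddCommGroup E] [InnerProductSpace ℝ E] [FiniteDimensional ℝ E]
      [NormedAddCommGroup F] [InnerProductSpace ℝ F] [FiniteDimensional ℝ F]
      (f g : E → F → ℝ) (ystar : E → F),
      (∀ x x' : E, ∀ y y' : F,
        |f x y - f x' y'| ≤ L₀ * Real.sqrt (‖x - x'‖ ^ 2 + ‖y - y'‖ ^ 2)) →
      Differentiable ℝ (fun p : E × F => f p.1 p.2) →
      (∀ x x' : E, ∀ y y' : F,
        ‖gradX f x y - gradX f x' y'‖ ^ 2 + ‖gradY f x y - gradY f x' y'‖ ^ 2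
          ≤ L₁ ^ 2 * (‖x - x'‖ ^ 2 + ‖y - y'‖ ^ 2)) →
      Differentiable ℝ (fun p : E × F => g p.1 p.2) →
      (∀ x x' : E, ∀ y y' : F,
        ‖gradX g x y - gradX g x' y'‖ ^ 2 + ‖gradY g x y - gradY g x' y'‖ ^ 2
          ≤ L₁ ^ 2 * (‖x - x'‖ ^ 2 + ‖y - y'‖ ^ 2)) →
      (∀ x : E, ∀ y y' : F,
        g x y + ⟪gradY g x y, y' - y⟫ + μg / 2 * ‖y' - y‖ ^ 2 ≤ g x y') →
      (∀ x : E, ∀ y : F, g x (ystar x) ≤ g x y) →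
      ContDiff ℝ 2 (fun p : E × F => g p.1 p.2) →
      (∀ x x' : E, ∀ y y' : F,
        ‖mixedD g x y - mixedD g x' y'‖ ≤ L₂ * Real.sqrt (‖x - x'‖ ^ 2 + ‖y - y'‖ ^ 2)) →
      (∀ x x' : E, ∀ y y' : F,
        ‖hessY g x y - hessY g x' y'‖ ≤ L₂ * Real.sqrt (‖x - x'‖ ^ 2 + ‖y - y'‖ ^ 2)) →
      Differentiable ℝ (fun x : E => f x (ystar x)) ∧
        ∀ x x' : E,
          ‖gradient (fun u : E => f u (ystar u)) x - gradient (fun u : E => f u (ystar u)) x'‖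
            ≤ Lf * ‖x - x'‖ := by
  refine ⟨(1 + L₁ / μg) * (L₁ + L₀ * L₂ / μg) * (1 + L₁ / μg), by positivity, ?_⟩
  intro E F _ _ _ _ _ _ f g ystar hfLip hfDiff hfGrad _ hgGrad hgSC hgMin hgC2 hMixed hHess
  have hΦ := differentiable_gradY_of_contDiff hgC2
  have hcrit : ∀ x, gradY g x (ystar x) = 0 := fun x => by
    rw [gradY, gradient, IsLocalMin.fderiv_eq_zero (.of_forall (hgMin x)), map_zero]
  have hmono := fun x => mul_norm_sq_le_inner_of_strongConvex (hgSC x)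
  have hgY : ∀ x x' y, ‖gradY g x y - gradY g x' y‖ ≤ L₁ * ‖x - x'‖ := fun x x' y => by
    simpa using norm_gradY_sub_le_of_sq hL₁.le hgGrad x x' y y
  have hylip := norm_sub_le_of_strongMonotone hμg hcrit hmono hgY
  have hcoer : ∀ x v, μg * ‖v‖ ^ 2 ≤ ⟪hessY g x (ystar x) v, v⟫ := fun x =>
    mul_norm_sq_le_inner_fderiv (hΦ _).hasFDerivAt_uncurry_right.differentiableAt.hasFDerivAt
      (hmono x _)
  have hgrad := fun x => hasGradientAt_comp_uncurry (hfDiff _)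
    (hasFDerivAt_implicitDeriv hμg hΦ hcrit hylip x (hcoer x))
  refine ⟨fun x => (hgrad x).differentiableAt, fun x x' => ?_⟩
  rw [(hgrad x).gradient, (hgrad x').gradient, mul_assoc]
  refine (norm_hypergradient_sub_le hμg hL₁.le hfGrad
    (norm_gradY_le_of_lipschitz hfDiff hL₀.le hfLip) (norm_adjoint_mixedD_le hΦ hL₁.le hgY)
    hMixed hHess hcoer x x').trans ?_
  gcongr
  exact sqrt_sq_add_sq_le (norm_nonneg _) (norm_nonneg _) (hylip x x')
end

section
/- For an L-smooth function φ and an inexact gradient step x' := x − βd with direction d ∈ E and stepsize β > 0, one has φ(x') − φ(x) ≤ −(β/2 − β²L)‖∇φ(x)‖² + (β/2 + β²L)‖∇φ(x) − d‖². -/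
open RealInnerProductSpace

/-!
The descent lemma `φ (x + h) ≤ φ x + ⟪∇φ x, h⟫ + L/2 ‖h‖²` bounds the step by
`-β ⟪∇φ x, d⟫ + L β²/2 ‖d‖²`. Polarization turns `-β ⟪∇φ x, d⟫` into
`β/2 (‖∇φ x - d‖² - ‖∇φ x‖² - ‖d‖²)`, and `‖d‖² ≤ 2 ‖∇φ x‖² + 2 ‖∇φ x - d‖²`
bounds the curvature term.
-/

section DescentLemma

variable {E : Type*} [NormedAddCommGroup E] [InnerProductSpace ℝ E] [CompleteSpace E]
  {φ : E → ℝ} {L : ℝ}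

theorem hasDerivAt_comp_add_smul_of_differentiableAt {x h : E} {t : ℝ}
    (hφ : DifferentiableAt ℝ φ (x + t • h)) :
    HasDerivAt (fun s : ℝ => φ (x + s • h)) ⟪gradient φ (x + t • h), h⟫ t := by
  have hline : HasDerivAt (fun s : ℝ => x + s • h) h t := by
    simpa using ((hasDerivAt_id t).smul_const h).const_add x
  exact hφ.hasGradientAt.hasFDerivAt.comp_hasDerivAt t hline

theorem inner_gradient_add_smul_sub_le
    (hLip : ∀ a b : E, ‖gradient φ a - gradient φ b‖ ≤ L * ‖a - b‖) (x h : E) {t : ℝ}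
    (ht : 0 ≤ t) :
    ⟪gradient φ (x + t • h) - gradient φ x, h⟫ ≤ L * t * ‖h‖ ^ 2 :=
  calc ⟪gradient φ (x + t • h) - gradient φ x, h⟫
      ≤ ‖gradient φ (x + t • h) - gradient φ x‖ * ‖h‖ := real_inner_le_norm _ _
    _ ≤ L * ‖(x + t • h) - x‖ * ‖h‖ := by gcongr; exact hLip _ _
    _ = L * t * ‖h‖ ^ 2 := by
      rw [add_sub_cancel_left, norm_smul, Real.norm_of_nonneg ht]; ring

theorem le_add_inner_gradient_add_sq_norm_of_lipschitz_gradient (hdiff : Differentiable ℝ φ)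
    (hLip : ∀ a b : E, ‖gradient φ a - gradient φ b‖ ≤ L * ‖a - b‖) (x h : E) :
    φ (x + h) ≤ φ x + ⟪gradient φ x, h⟫ + L / 2 * ‖h‖ ^ 2 := by
  have hf (t : ℝ) := hasDerivAt_comp_add_smul_of_differentiableAt (hdiff (x + t • h))
  have hB (t : ℝ) : HasDerivAt (fun s : ℝ => φ x + s * ⟪gradient φ x, h⟫ + L / 2 * s ^ 2 * ‖h‖ ^ 2)
      (⟪gradient φ x, h⟫ + L * t * ‖h‖ ^ 2) t := by
    refine ((((hasDerivAt_id t).mul_const ⟪gradient φ x, h⟫).const_add (φ x)).add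
      (((hasDerivAt_pow 2 t).const_mul (L / 2)).mul_const (‖h‖ ^ 2))).congr_deriv ?_
    push_cast; ring
  have key := image_le_of_deriv_right_le_deriv_boundary (a := 0) (b := 1)
    (fun t _ => (hf t).continuousAt.continuousWithinAt) (fun t _ => (hf t).hasDerivWithinAt)
    (by simp) (fun t _ => (hB t).continuousAt.continuousWithinAt)
    (fun t _ => (hB t).hasDerivWithinAt)
    (fun t ht => by
      have := inner_gradient_add_smul_sub_le hLip x h ht.1
      rw [inner_sub_left] at this
      linarith)
    (Set.right_mem_Icc.mpr zero_le_one)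
  simpa using key

end DescentLemma

theorem inner_neg_smul_add_sq_norm_neg_smul_le {E : Type*} [NormedAddCommGroup E]
    [InnerProductSpace ℝ E] {L β : ℝ} (hL : 0 ≤ L) (hβ : 0 ≤ β) (g d : E) :
    ⟪g, -(β • d)⟫ + L / 2 * ‖-(β • d)‖ ^ 2 ≤
      -(β / 2 - β ^ 2 * L) * ‖g‖ ^ 2 + (β / 2 + β ^ 2 * L) * ‖g - d‖ ^ 2 := by
  have hpolar := norm_sub_sq_real g d
  have hd : ‖d‖ ^ 2 ≤ 2 * ‖g‖ ^ 2 + 2 * ‖g - d‖ ^ 2 := by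
    have := parallelogram_law_with_norm ℝ g (g - d)
    rw [sub_sub_cancel] at this
    nlinarith [sq_nonneg ‖g + (g - d)‖]
  rw [inner_neg_right, inner_smul_right, norm_neg, norm_smul, mul_pow, Real.norm_eq_abs, sq_abs]
  nlinarith [mul_le_mul_of_nonneg_left hd (by positivity : 0 ≤ L / 2 * β ^ 2),
    mul_nonneg hβ (sq_nonneg ‖d‖)]

/-- for an `L`-smooth function `φ` and an inexact gradient step
`x' = x - β d`, one has
`φ(x') - φ(x) ≤ -(β/2 - β²L)‖∇φ(x)‖² + (β/2 + β²L)‖∇φ(x) - d‖²`. -/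
theorem inexact_gradient_step_descent
    {E : Type*} [NormedAddCommGroup E] [InnerProductSpace ℝ E] [FiniteDimensional ℝ E]
    (L β : ℝ) (hL : 0 < L) (hβ : 0 < β)
    (φ : E → ℝ) (hdiff : Differentiable ℝ φ)
    (hLip : ∀ a b : E, ‖gradient φ a - gradient φ b‖ ≤ L * ‖a - b‖)
    (x d : E) :
    φ (x - β • d) - φ x ≤
      -(β / 2 - β ^ 2 * L) * ‖gradient φ x‖ ^ 2
        + (β / 2 + β ^ 2 * L) * ‖gradient φ x - d‖ ^ 2 := by
  have hdescent :=
    le_add_inner_gradient_add_sq_norm_of_lipschitz_gradient hdiff hLip x (-(β • d))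
  have hstep := inner_neg_smul_add_sq_norm_neg_smul_le hL.le hβ.le (gradient φ x) d
  rw [← sub_eq_add_neg] at hdescent
  linarith
end

section
/- The total window-averaged decrement is bounded by the boundedness and variation terms: Σ_{t=1}^{T} (1/W) Σ_{i=0}^{K−1} η^i [φ_{t−i}(x_{t−i}) − φ_{t−i}(x_{t+1−i})] ≤ 2MT/W + Σ_{j=0}^{T} max(0, sup_{x∈𝒳} (φ_{j+1}(x) − φ_j(x))). -/
/-
Exchanging the two sums, the weight `η ^ i` multiplies the sum over `t ∈ [1, T]` of the
decrement `φ_s(x_s) - φ_s(x_{s+1})` at `s = t - i`, which vanishes for `s ≤ 0`. For `i < T` the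
remaining sum over `s ∈ [1, T - i]` telescopes once `φ_{s+1}(x_{s+1})` is added and subtracted:
it is at most `φ_1(x_1) - φ_{T-i+1}(x_{T-i+1}) ≤ 2M` plus the variations
`max 0 (sup (φ_{s+1} - φ_s))`. Since `η ^ i ≤ 1`, the boundary terms contribute at most `2M`
for each of at most `T` indices `i`, and the variations at most `W` times their sum.
-/

open Finset

theorem Int.sum_Ico_sub' {M : Type*} [AddCommGroup M] (f : ℤ → M) {a b : ℤ}
    (hab : a ≤ b) : ∑ t ∈ Ico a b, (f t - f (t + 1)) = f a - f b := by
  induction b, hab using Int.leInduction with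
  | base => simp
  | succ b hab ih =>
    rw [← insert_Ico_right_eq_Ico_add_one hab, sum_insert (by simp), ih]
    abel

theorem Int.sum_Icc_comp_sub {M : Type*} [AddCommMonoid M] (f : ℤ → M) (a b c : ℤ) :
    ∑ t ∈ Icc a b, f (t - c) = ∑ s ∈ Icc (a - c) (b - c), f s := by
  rw [← sub_add_cancel a c, ← sub_add_cancel b c, ← image_add_right_Icc,
    sum_image (add_left_injective c).injOn]
  simp

theorem sum_range_ite_lt_le {c : ℝ} (hc : 0 ≤ c) (K n : ℕ) :
    ∑ i ∈ range K, (if i < n then c else 0) ≤ c * n := by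
  have : ∑ i ∈ range K, (if i < n then c else 0) = c * min K n := by
    simp_rw [← mem_range (n := n)]
    rw [sum_ite_mem, range_inter_range, sum_const, card_range, nsmul_eq_mul, mul_comm]
  rw [this]
  exact mul_le_mul_of_nonneg_left (by exact_mod_cast min_le_right K n) hc

section Window

variable {X : Type*} (φ : ℤ → X → ℝ) (x : ℤ → X)

noncomputable def decrement (s : ℤ) : ℝ := φ s (x s) - φ s (x (s + 1))

noncomputable def variation (j : ℤ) : ℝ := max 0 (⨆ y : X, (φ (j + 1) y - φ j y))

variable {φ} {M : ℝ} {T : ℤ}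

theorem variation_nonneg (j : ℤ) : 0 ≤ variation φ j := le_max_left _ _

theorem sub_le_variation (hbound : ∀ t ≤ T + 1, ∀ y, |φ t y| ≤ M) {j : ℤ} (hj : j ≤ T)
    (y : X) : φ (j + 1) y - φ j y ≤ variation φ j := by
  have hbdd : BddAbove (Set.range fun y => φ (j + 1) y - φ j y) := by
    refine ⟨2 * M, ?_⟩
    rintro _ ⟨y, rfl⟩
    have h₁ := abs_le.mp (hbound (j + 1) (by omega) y)
    have h₂ := abs_le.mp (hbound j (by omega) y)
    dsimp only
    linarith
  exact (le_ciSup hbdd y).trans (le_max_right _ _)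

theorem decrement_eq_zero (hzero : ∀ t ≤ (0 : ℤ), ∀ y, φ t y = 0) {s : ℤ} (hs : s ≤ 0) :
    decrement φ x s = 0 := by
  simp [decrement, hzero s hs]

theorem sum_decrement_le (hbound : ∀ t ≤ T + 1, ∀ y, |φ t y| ≤ M) {n : ℤ} (hn : 1 ≤ n)
    (hnT : n ≤ T) :
    ∑ s ∈ Icc 1 n, decrement φ x s ≤ 2 * M + ∑ j ∈ Icc 0 T, variation φ j := by
  set g : ℤ → ℝ := fun s => φ s (x s)
  have hg : ∀ s ≤ T + 1, |g s| ≤ M := fun s hs => hbound s hs (x s)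
  calc ∑ s ∈ Icc 1 n, decrement φ x s
      ≤ ∑ s ∈ Icc 1 n, ((g s - g (s + 1)) + variation φ s) := by
        refine sum_le_sum fun s hs => ?_
        have := sub_le_variation hbound (j := s) (by grind) (x (s + 1))
        simp only [decrement, g]
        linarith
    _ = (g 1 - g (n + 1)) + ∑ s ∈ Icc 1 n, variation φ s := by
        rw [sum_add_distrib, ← Ico_add_one_right_eq_Icc, Int.sum_Ico_sub' g (by omega)]
    _ ≤ 2 * M + ∑ j ∈ Icc 0 T, variation φ j := by
        refine add_le_add ?_ ?_
        · linarith [abs_sub (g 1) (g (n + 1)), le_abs_self (g 1 - g (n + 1)),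
            hg 1 (by omega), hg (n + 1) (by omega)]
        · exact sum_le_sum_of_subset_of_nonneg (Icc_subset_Icc (by omega) hnT)
            fun j _ _ => variation_nonneg j

theorem sum_decrement_sub_le (hbound : ∀ t ≤ T + 1, ∀ y, |φ t y| ≤ M)
    (hzero : ∀ t ≤ (0 : ℤ), ∀ y, φ t y = 0) (i : ℕ) :
    ∑ t ∈ Icc 1 T, decrement φ x (t - i) ≤
      (if (i : ℤ) < T then 2 * M else 0) + ∑ j ∈ Icc 0 T, variation φ j := by
  have hshift : ∑ t ∈ Icc 1 T, decrement φ x (t - i) = ∑ s ∈ Icc 1 (T - i), decrement φ x s := by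
    rw [Int.sum_Icc_comp_sub]
    refine (sum_subset (Icc_subset_Icc (by omega) le_rfl) fun s hs hs' => ?_).symm
    exact decrement_eq_zero x hzero (by grind)
  rw [hshift]
  split_ifs with hi
  · exact sum_decrement_le x hbound (by omega) (by omega)
  · rw [Icc_eq_empty_of_lt (by omega), sum_empty, zero_add]
    exact sum_nonneg fun j _ => variation_nonneg j

theorem sum_pow_mul_sum_decrement_sub_le (hbound : ∀ t ≤ T + 1, ∀ y, |φ t y| ≤ M)
    (hzero : ∀ t ≤ (0 : ℤ), ∀ y, φ t y = 0) (hM : 0 ≤ M) (hT : 0 ≤ T) {η : ℝ} (hη0 : 0 ≤ η)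
    (hη1 : η ≤ 1) (K : ℕ) :
    ∑ i ∈ range K, η ^ i * ∑ t ∈ Icc 1 T, decrement φ x (t - i) ≤
      2 * M * T + (∑ i ∈ range K, η ^ i) * ∑ j ∈ Icc 0 T, variation φ j := by
  lift T to ℕ using hT
  set V := ∑ j ∈ Icc (0 : ℤ) T, variation φ j
  have hwindow : ∀ i ∈ range K, η ^ i * ∑ t ∈ Icc 1 (T : ℤ), decrement φ x (t - i) ≤
      (if i < T then 2 * M else 0) + η ^ i * V := by
    intro i _
    have h := sum_decrement_sub_le x hbound hzero i
    simp only [Nat.cast_lt] at h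
    calc η ^ i * ∑ t ∈ Icc 1 (T : ℤ), decrement φ x (t - i)
        ≤ η ^ i * ((if i < T then 2 * M else 0) + V) := by gcongr
      _ ≤ (if i < T then 2 * M else 0) + η ^ i * V := by
        rw [mul_add]
        gcongr
        exact mul_le_of_le_one_left (by positivity) (pow_le_one₀ hη0 hη1)
  calc _ ≤ ∑ i ∈ range K, ((if i < T then 2 * M else 0) + η ^ i * V) := sum_le_sum hwindow
    _ ≤ 2 * M * T + (∑ i ∈ range K, η ^ i) * V := by
      rw [sum_add_distrib, ← sum_mul]
      gcongr
      exact_mod_cast sum_range_ite_lt_le (by positivity) K T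

end Window

theorem window_decrement_total_bound_general
    {X : Type*}
    (K : ℕ) (hK : 1 ≤ K) (η : ℝ) (hη0 : 0 < η) (hη1 : η < 1)
    (M : ℝ) (hM : 0 < M) (T : ℤ) (hT : 1 ≤ T)
    (φ : ℤ → X → ℝ)
    (hbound : ∀ t ≤ T + 1, ∀ x : X, |φ t x| ≤ M)
    (hzero : ∀ t ≤ (0 : ℤ), ∀ x : X, φ t x = 0)
    (x : ℤ → X)
    (W : ℝ) (hW : W = ∑ i ∈ Finset.range K, η ^ i) :
    ∑ t ∈ Finset.Icc (1 : ℤ) T, (1 / W) * ∑ i ∈ Finset.range K,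
        η ^ i * (φ (t - i) (x (t - i)) - φ (t - i) (x (t + 1 - i)))
      ≤ 2 * M * (T : ℝ) / W
        + ∑ j ∈ Finset.Icc (0 : ℤ) T, max 0 (⨆ x' : X, (φ (j + 1) x' - φ j x')) := by
  have hW₀ : 0 < W := hW ▸ lt_of_lt_of_le one_pos
    (single_le_sum (fun i _ => pow_nonneg hη0.le i) (mem_range.mpr hK))
  calc ∑ t ∈ Icc (1 : ℤ) T, (1 / W) * ∑ i ∈ range K,
        η ^ i * (φ (t - i) (x (t - i)) - φ (t - i) (x (t + 1 - i)))
      = (1 / W) * ∑ i ∈ range K, η ^ i * ∑ t ∈ Icc 1 T, decrement φ x (t - i) := by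
        rw [← mul_sum, sum_comm]
        simp only [decrement, mul_sum, add_sub_right_comm]
    _ ≤ (1 / W) * (2 * M * T + W * ∑ j ∈ Icc 0 T, variation φ j) := by
        gcongr
        exact hW ▸ sum_pow_mul_sum_decrement_sub_le x hbound hzero hM.le (by omega) hη0.le
          hη1.le K
    _ = 2 * M * T / W + ∑ j ∈ Icc 0 T, variation φ j := by field_simp

/-- the total window-averaged decrement is bounded by the boundedness
and variation terms:
`∑_{t=1}^{T} (1/W) ∑_{i=0}^{K-1} η^i [φ_{t-i}(x_{t-i}) - φ_{t-i}(x_{t+1-i})]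
  ≤ 2MT/W + ∑_{j=0}^{T} max(0, sup_x (φ_{j+1}(x) - φ_j(x)))`. -/
theorem window_decrement_total_bound
    {X : Type*} [Nonempty X]
    (K : ℕ) (hK : 1 ≤ K) (η : ℝ) (hη0 : 0 < η) (hη1 : η < 1)
    (M : ℝ) (hM : 0 < M) (T : ℤ) (hT : 1 ≤ T)
    (φ : ℤ → X → ℝ)
    (hbound : ∀ t ≤ T + 1, ∀ x : X, |φ t x| ≤ M)
    (hzero : ∀ t ≤ (0 : ℤ), ∀ x : X, φ t x = 0)
    (x : ℤ → X)
    (W : ℝ) (hW : W = ∑ i ∈ Finset.range K, η ^ i) :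
    ∑ t ∈ Finset.Icc (1 : ℤ) T, (1 / W) * ∑ i ∈ Finset.range K,
        η ^ i * (φ (t - i) (x (t - i)) - φ (t - i) (x (t + 1 - i)))
      ≤ 2 * M * (T : ℝ) / W
        + ∑ j ∈ Finset.Icc (0 : ℤ) T, max 0 (⨆ x' : X, (φ (j + 1) x' - φ j x')) :=
  window_decrement_total_bound_general K hK η hη0 hη1 M hM T hT φ hbound hzero x W hW
end

section
/- For any real numbers ρ, η with 0 < ρ < η < 1, any integers K ≥ 1 and T ≥ 2, and any nonnegative reals a₁, …, a_{T−1}, the weighted triple sum satisfies Σ_{t=2}^{T} Σ_{i=0}^{K−1} η^i Σ_{j=0}^{t−2−i} ρ^j a_{t−1−i−j} ≤ (η / ((η−ρ)(1−η))) · Σ_{s=1}^{T−1} a_s, where the inner sum over j is empty (equal to zero) whenever t − 2 − i < 0. -/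
/-! Expanding the triple sum, the term `η ^ i ρ ^ j a s` occurs for each `t` with
`s = t - 1 - i - j`, i.e. at most once for every triple `(i, j, s)`. Hence the sum is at most
`(∑ η ^ i) (∑ ρ ^ j) ∑ a s ≤ (1 - η)⁻¹ (1 - ρ)⁻¹ ∑ a s`, and `(1 - ρ)⁻¹ ≤ η / (η - ρ)`
because `ρ (1 - η) ≥ 0`. -/

open Finset

lemma sum_Icc_sub_le_sum_Icc {M : Type*} [AddCommMonoid M] [Preorder M] [AddLeftMono M]
    (a : ℕ → M) {T n : ℕ} (hn : 1 ≤ n)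
    (ha : ∀ s ∈ Icc 1 (T - 1), 0 ≤ a s) :
    ∑ t ∈ Icc (n + 1) T, a (t - n) ≤ ∑ s ∈ Icc 1 (T - 1), a s := by
  have hshift : ∑ t ∈ Icc (n + 1) T, a (t - n) = ∑ s ∈ Icc 1 (T - n), a s :=
    sum_nbij' (· - n) (· + n) (by intro t ht; simp only [mem_Icc] at ht ⊢; omega)
      (by intro s hs; simp only [mem_Icc] at hs ⊢; omega)
      (by intro t ht; simp only [mem_Icc] at ht; omega) (by intro s _; simp) (fun _ _ => rfl)
  rw [hshift]
  exact sum_le_sum_of_subset_of_nonneg (Icc_subset_Icc_right (by omega)) fun s hs _ => ha s hs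

lemma sum_Icc_sum_sum_conv_comm {R : Type*} [CommSemiring R] (f g a : ℕ → R) (K T : ℕ) :
    ∑ t ∈ Icc 2 T, ∑ i ∈ range K, f i * ∑ j ∈ range (t - 1 - i), g j * a (t - 1 - i - j)
      = ∑ i ∈ range K, f i * ∑ j ∈ range T, g j *
          ∑ t ∈ Icc (i + j + 1 + 1) T, a (t - (i + j + 1)) := by
  rw [sum_comm]
  refine sum_congr rfl fun i _ => ?_
  rw [← mul_sum, sum_comm' (t' := range T) (s' := fun j => Icc (i + j + 1 + 1) T)
    (by intro t j; simp only [mem_Icc, mem_range]; omega)]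
  congr 1
  refine sum_congr rfl fun j _ => ?_
  rw [mul_sum]
  refine sum_congr rfl fun t _ => ?_
  rw [show t - 1 - i - j = t - (i + j + 1) by omega]

lemma geom_sum_le_inv_one_sub {R : Type*} [Field R] [LinearOrder R] [IsStrictOrderedRing R]
    {x : R} (h0 : 0 ≤ x) (h1 : x < 1) (n : ℕ) : ∑ i ∈ range n, x ^ i ≤ (1 - x)⁻¹ := by
  simpa only [← range_eq_Ico, pow_zero, one_div] using
    geom_sum_Ico_le_of_lt_one (m := 0) (n := n) h0 h1

lemma inv_one_sub_le_div_sub {R : Type*} [Field R] [LinearOrder R] [IsStrictOrderedRing R]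
    {ρ η : R} (hρ : 0 ≤ ρ) (hρη : ρ < η) (hη : η ≤ 1) :
    (1 - ρ)⁻¹ ≤ η / (η - ρ) := by
  rw [inv_eq_one_div, div_le_div_iff₀ (by linarith) (by linarith)]
  nlinarith

theorem geometric_triple_sum_bound_general
    (ρ η : ℝ) (hρ0 : 0 < ρ) (hρη : ρ < η) (hη1 : η < 1)
    (K T : ℕ)
    (a : ℕ → ℝ) (ha : ∀ s ∈ Finset.Icc 1 (T - 1), 0 ≤ a s) :
    ∑ t ∈ Finset.Icc 2 T, ∑ i ∈ Finset.range K, η ^ i *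
        ∑ j ∈ Finset.range (t - 1 - i), ρ ^ j * a (t - 1 - i - j)
      ≤ η / ((η - ρ) * (1 - η)) * ∑ s ∈ Finset.Icc 1 (T - 1), a s := by
  have hη0 : 0 < η := hρ0.trans hρη
  set A := ∑ s ∈ Icc 1 (T - 1), a s
  have hA : 0 ≤ A := sum_nonneg ha
  calc _ = ∑ i ∈ range K, η ^ i * ∑ j ∈ range T, ρ ^ j *
          ∑ t ∈ Icc (i + j + 1 + 1) T, a (t - (i + j + 1)) := sum_Icc_sum_sum_conv_comm _ _ a K T
    _ ≤ ∑ i ∈ range K, η ^ i * ∑ j ∈ range T, ρ ^ j * A := by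
        gcongr with i _ j _
        exact sum_Icc_sub_le_sum_Icc a (by omega) ha
    _ = (∑ i ∈ range K, η ^ i) * (∑ j ∈ range T, ρ ^ j) * A := by
        simp only [mul_assoc, sum_mul]
    _ ≤ (1 - η)⁻¹ * (1 - ρ)⁻¹ * A := by
        gcongr ?_ * ?_ * A
        · exact geom_sum_le_inv_one_sub hη0.le hη1 K
        · exact geom_sum_le_inv_one_sub hρ0.le (hρη.trans hη1) T
    _ ≤ η / ((η - ρ) * (1 - η)) * A := by
        rw [div_mul_eq_div_div, div_eq_mul_inv _ (1 - η), mul_comm (1 - η)⁻¹]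
        have h1η : 0 < 1 - η := by linarith
        gcongr
        exact inv_one_sub_le_div_sub hρ0.le hρη hη1.le

/-- for `0 < ρ < η < 1`, integers `K ≥ 1`, `T ≥ 2`, and nonnegative
reals `a₁, …, a_{T-1}`, the weighted triple sum
`∑_{t=2}^{T} ∑_{i=0}^{K-1} η^i ∑_{j=0}^{t-2-i} ρ^j a_{t-1-i-j}` is at most
`(η / ((η-ρ)(1-η))) ∑_{s=1}^{T-1} a_s` (the inner sum over `j` is empty when
`t - 2 - i < 0`). -/
theorem geometric_triple_sum_bound
    (ρ η : ℝ) (hρ0 : 0 < ρ) (hρη : ρ < η) (hη1 : η < 1)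
    (K T : ℕ) (hK : 1 ≤ K) (hT : 2 ≤ T)
    (a : ℕ → ℝ) (ha : ∀ s ∈ Finset.Icc 1 (T - 1), 0 ≤ a s) :
    ∑ t ∈ Finset.Icc 2 T, ∑ i ∈ Finset.range K, η ^ i *
        ∑ j ∈ Finset.range (t - 1 - i), ρ ^ j * a (t - 1 - i - j)
      ≤ η / ((η - ρ) * (1 - η)) * ∑ s ∈ Finset.Icc 1 (T - 1), a s :=
  geometric_triple_sum_bound_general ρ η hρ0 hρη hη1 K T a ha
end

section
/- If g, h : F → ℝ are each μ-strongly convex with minimizers y_g and y_h respectively, and |g(y) − h(y)| ≤ Δ for every y ∈ F, then ‖y_g − y_h‖² ≤ 2Δ/μ. -/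
open RealInnerProductSpace

lemma grad_zero_of_min {F : Type*} [NormedAddCommGroup F] [InnerProductSpace ℝ F]
    [CompleteSpace F] (g : F → ℝ) (hgd : Differentiable ℝ g) (yg : F)
    (hyg : ∀ y, g yg ≤ g y) : gradient g yg = 0 := by
  have hloc : IsLocalMin g yg := Filter.Eventually.of_forall hyg
  have hf : fderiv ℝ g yg = 0 := hloc.fderiv_eq_zero
  rw [gradient, hf]
  simp

/-- if `g` and `h` are `μ`-strongly convex with minimizers `y_g`, `y_h`,
and `|g y - h y| ≤ Δ` for all `y`, then `‖y_g - y_h‖² ≤ 2Δ/μ`. -/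
theorem minimizers_close_of_functions_close
    {F : Type*} [NormedAddCommGroup F] [InnerProductSpace ℝ F] [FiniteDimensional ℝ F]
    (μ Δ : ℝ) (hμ : 0 < μ) (hΔ : 0 ≤ Δ)
    (g h : F → ℝ) (hgd : Differentiable ℝ g) (hhd : Differentiable ℝ h)
    (hgsc : ∀ y y' : F, g y + ⟪gradient g y, y' - y⟫ + μ / 2 * ‖y' - y‖ ^ 2 ≤ g y')
    (hhsc : ∀ y y' : F, h y + ⟪gradient h y, y' - y⟫ + μ / 2 * ‖y' - y‖ ^ 2 ≤ h y')
    (yg yh : F) (hyg : ∀ y, g yg ≤ g y) (hyh : ∀ y, h yh ≤ h y)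
    (hclose : ∀ y, |g y - h y| ≤ Δ) :
    ‖yg - yh‖ ^ 2 ≤ 2 * Δ / μ := by
  have hg0 : gradient g yg = 0 := grad_zero_of_min g hgd yg hyg
  have hh0 : gradient h yh = 0 := grad_zero_of_min h hhd yh hyh
  have h1 := hgsc yg yh
  have h2 := hhsc yh yg
  rw [hg0] at h1
  rw [hh0] at h2
  simp only [inner_zero_left, add_zero, zero_add] at h1 h2
  have hn : ‖yg - yh‖ ^ 2 = ‖yh - yg‖ ^ 2 := by rw [norm_sub_rev]
  have hc1 := abs_le.mp (hclose yh)
  have hc2 := abs_le.mp (hclose yg)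
  rw [le_div_iff₀ hμ]
  nlinarith [h1, h2, hc1.1, hc1.2, hc2.1, hc2.2, hn]
end

section
/- The inner-level path length is controlled by the inner-function variation: Σ_{t=2}^{T} sup_{x∈E} ‖y*_{t−1}(x) − y_t*(x)‖² ≤ (2/μ_g) Σ_{t=2}^{T} Δ_t. -/
open RealInnerProductSpace

/-- the inner-level path length is controlled by the inner-function
variation: `∑_{t=2}^{T} sup_{x} ‖y*_{t-1}(x) - y*_t(x)‖² ≤ (2/μ_g) ∑_{t=2}^{T} Δ_t`. -/
theorem path_length_le_function_variation
    {E : Type*} [NormedAddCommGroup E] [InnerProductSpace ℝ E] [FiniteDimensional ℝ E]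
    {F : Type*} [NormedAddCommGroup F] [InnerProductSpace ℝ F] [FiniteDimensional ℝ F]
    (μg : ℝ) (hμg : 0 < μg) (T : ℕ) (hT : 2 ≤ T)
    (g : ℕ → E → F → ℝ) (ystar : ℕ → E → F)
    (hdiff : ∀ t ∈ Finset.Icc 1 T, ∀ x : E, Differentiable ℝ (g t x))
    (hsc : ∀ t ∈ Finset.Icc 1 T, ∀ x : E, ∀ y y' : F,
      g t x y + ⟪gradient (g t x) y, y' - y⟫ + μg / 2 * ‖y' - y‖ ^ 2 ≤ g t x y')
    (hmin : ∀ t ∈ Finset.Icc 1 T, ∀ x : E, ∀ y : F, g t x (ystar t x) ≤ g t x y)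
    (Δ : ℕ → ℝ) (hΔ : ∀ t ∈ Finset.Icc 2 T, 0 ≤ Δ t)
    (hvar : ∀ t ∈ Finset.Icc 2 T, ∀ x : E, ∀ y : F, |g (t - 1) x y - g t x y| ≤ Δ t)
    (hbdd : ∀ t ∈ Finset.Icc 2 T,
      BddAbove (Set.range fun x : E => ‖ystar (t - 1) x - ystar t x‖ ^ 2)) :
    ∑ t ∈ Finset.Icc 2 T, (⨆ x : E, ‖ystar (t - 1) x - ystar t x‖ ^ 2)
      ≤ 2 / μg * ∑ t ∈ Finset.Icc 2 T, Δ t := by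
  rw [Finset.mul_sum]
  refine Finset.sum_le_sum fun t ht => ?_
  simp only [Finset.mem_Icc] at ht
  have ht1 : t - 1 ∈ Finset.Icc 1 T := by
    simp only [Finset.mem_Icc]; omega
  have htT : t ∈ Finset.Icc 1 T := by
    simp only [Finset.mem_Icc]; omega
  have key : ∀ x : E, ‖ystar (t - 1) x - ystar t x‖ ^ 2 ≤ 2 / μg * Δ t := by
    intro x
    -- gradient of g t x at its minimizer is zero
    have hgrad : gradient (g t x) (ystar t x) = 0 := by
      have hloc : IsLocalMin (g t x) (ystar t x) :=
        IsMinOn.isLocalMin (fun y _ => hmin t htT x y) Filter.univ_mem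
      have := hloc.fderiv_eq_zero
      simp [gradient, this]
    have h1 := hsc t htT x (ystar t x) (ystar (t - 1) x)
    rw [hgrad] at h1
    simp only [inner_zero_left, add_zero] at h1
    have hgrad' : gradient (g (t - 1) x) (ystar (t - 1) x) = 0 := by
      have hloc : IsLocalMin (g (t - 1) x) (ystar (t - 1) x) :=
        IsMinOn.isLocalMin (fun y _ => hmin (t - 1) ht1 x y) Filter.univ_mem
      have := hloc.fderiv_eq_zero
      simp [gradient, this]
    have h2 := hsc (t - 1) ht1 x (ystar (t - 1) x) (ystar t x)
    rw [hgrad'] at h2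
    simp only [inner_zero_left, add_zero] at h2
    have hnorm : ‖ystar t x - ystar (t - 1) x‖ = ‖ystar (t - 1) x - ystar t x‖ :=
      norm_sub_rev _ _
    rw [hnorm] at h2
    have h3 := hvar t (Finset.mem_Icc.mpr ht) x (ystar (t - 1) x)
    have h4 := hvar t (Finset.mem_Icc.mpr ht) x (ystar t x)
    rw [abs_le] at h3 h4
    have hnn : μg / 2 * ‖ystar (t - 1) x - ystar t x‖ ^ 2 ≤ 2 * Δ t := by
      nlinarith [h1, h2, h3.1, h3.2, h4.1, h4.2]
    rw [div_mul_eq_mul_div, le_div_iff₀ hμg]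
    nlinarith
  rcases isEmpty_or_nonempty E with hE | hE
  · rw [iSup_of_empty']
    simp only [Real.sSup_empty]
    have := hΔ t (by simp only [Finset.mem_Icc]; omega)
    positivity
  · exact ciSup_le key
end
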